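/- arXiv:1207.3671 — 5 statements merged into one kernel-verified Lean document; each statement's English description precedes it below -/
import Mathlib

section
/- Let d ≥ 1, let A_1,…,A_s and B_1,…,B_s be real d×d matrices, h > 0, and p_{n+1} ∈ ℝ^d. Suppose ξ̃^(1),…,ξ̃^(s), ξ^(1),…,ξ^(s) ∈ ℝ^d satisfy the discrete adjoint system of (SRK2): ξ̃^(i) = h ω̃_i p_{n+1} + h Σ_{j=1}^{s} ã_{ji} (A_j ξ̃^(j) + B_j ξ^(j)) and ξ^(i) = h ω_i p_{n+1} + h Σ_{j=1}^{s} a_{ji} (A_j ξ̃^(j) + B_j ξ^(j)) for i = 1,…,s, together with p_n = p_{n+1} + Σ_{i=1}^{s} (A_i ξ̃^(i) + B_i ξ^(i)). Define the transformed stage values P̃^(i) := ξ̃^(i)/(h ω̃_i) and P^(i) := ξ^(i)/(h ω_i). Then (P̃^(i), P^(i), p_n, p_{n+1}) satisfy the adjoint IMEX Runge–Kutta scheme (ARK): P̃^(i) = p_n − h Σ_{j=1}^{s} α̃_{ij} A_j P̃^(j) − h Σ_{j=1}^{s} α_{ij} B_j P^(j), P^(i) = p_n − h Σ_{j=1}^{s}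 β̃_{ij} A_j P̃^(j) − h Σ_{j=1}^{s} β_{ij} B_j P^(j) for i = 1,…,s, and p_{n+1} = p_n − h Σ_{i=1}^{s} ω̃_i A_i P̃^(i) − h Σ_{i=1}^{s} ω_i B_i P^(i). -/
/-!
Substituting `ξ̃^(j) = h ω̃_j P̃^(j)` and `ξ^(j) = h ω_j P^(j)` turns every increment
`A_j ξ̃^(j) + B_j ξ^(j)` into `h (ω̃_j A_j P̃^(j) + ω_j B_j P^(j))`, so `p_n - p_{n+1}` is `h` times
the full weighted sum. Dividing the `i`-th stage equation by `h ω̃_i` (resp. `h ω_i`) and writing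
`p_{n+1}` as `p_n` minus that sum gives exactly the (ARK) stages with coefficients
`ω̃_j - (ω̃_j/ω̃_i) ã_{ji}`, etc.
-/

open Finset Matrix

section

variable {K V ι : Type*} [Field K] [AddCommGroup V] [Module K V] [Fintype ι]

theorem eq_sub_smul_sum_sub_smul_sum {h : K} (c e : ι → K) (M N : ι → V) {p₁ p : V}
    (hp : p = p₁ + ∑ j, ((h * c j) • M j + (h * e j) • N j)) :
    p₁ = p - h • ∑ j, c j • M j - h • ∑ j, e j • N j := by
  simp only [hp, mul_smul, sum_add_distrib, ← smul_sum]
  abel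

theorem inv_smul_stage_eq {h γ : K} (hh : h ≠ 0) (hγ : γ ≠ 0) (k c e : ι → K) (M N : ι → V)
    {p₁ p : V} (hp : p = p₁ + ∑ j, ((h * c j) • M j + (h * e j) • N j)) :
    (h * γ)⁻¹ • ((h * γ) • p₁ + h • ∑ j, k j • ((h * c j) • M j + (h * e j) • N j))
      = p - h • ∑ j, (c j - c j / γ * k j) • M j - h • ∑ j, (e j - e j / γ * k j) • N j := by
  have hk : h • ∑ j, k j • ((h * c j) • M j + (h * e j) • N j)
      = (h * γ) • (h • ∑ j, (c j / γ * k j) • M j + h • ∑ j, (e j / γ * k j) • N j) := by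
    simp only [smul_add, smul_sum, smul_smul, ← sum_add_distrib]
    refine sum_congr rfl fun j _ => ?_
    congr 2 <;> field_simp
  rw [hk, ← smul_add, inv_smul_smul₀ (mul_ne_zero hh hγ), eq_sub_smul_sum_sub_smul_sum c e M N hp]
  simp only [sub_smul, sum_sub_distrib, smul_sub]
  abel

end

theorem adjoint_srk2_to_ark_general (s d : ℕ)
    (ta a : Fin s → Fin s → ℝ) (tw w : Fin s → ℝ)
    (htw : ∀ i, tw i ≠ 0) (hw : ∀ i, w i ≠ 0)
    (tα α tβ β : Fin s → Fin s → ℝ)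
    (htα : ∀ i j, tα i j = tw j - (tw j / tw i) * ta j i)
    (hα : ∀ i j, α i j = w j - (w j / tw i) * ta j i)
    (htβ : ∀ i j, tβ i j = tw j - (tw j / w i) * a j i)
    (hβ : ∀ i j, β i j = w j - (w j / w i) * a j i)
    (A B : Fin s → Matrix (Fin d) (Fin d) ℝ)
    (h : ℝ) (hh : 0 < h) (pn1 : Fin d → ℝ)
    (tξ ξ : Fin s → Fin d → ℝ)
    (hξ1 : ∀ i, tξ i = (h * tw i) • pn1
        + h • ∑ j, ta j i • (A j *ᵥ tξ j + B j *ᵥ ξ j))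
    (hξ2 : ∀ i, ξ i = (h * w i) • pn1
        + h • ∑ j, a j i • (A j *ᵥ tξ j + B j *ᵥ ξ j))
    (pn : Fin d → ℝ)
    (hpn : pn = pn1 + ∑ i, (A i *ᵥ tξ i + B i *ᵥ ξ i))
    (tP P : Fin s → Fin d → ℝ)
    (htP : ∀ i, tP i = (h * tw i)⁻¹ • tξ i)
    (hP : ∀ i, P i = (h * w i)⁻¹ • ξ i) :
    (∀ i, tP i = pn - h • ∑ j, tα i j • (A j *ᵥ tP j)
                    - h • ∑ j, α i j • (B j *ᵥ P j)) ∧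
    (∀ i, P i = pn - h • ∑ j, tβ i j • (A j *ᵥ tP j)
                   - h • ∑ j, β i j • (B j *ᵥ P j)) ∧
    pn1 = pn - h • ∑ i, tw i • (A i *ᵥ tP i) - h • ∑ i, w i • (B i *ᵥ P i) := by
  have hh₀ : h ≠ 0 := hh.ne'
  have htξ : ∀ j, tξ j = (h * tw j) • tP j := fun j =>
    ((eq_inv_smul_iff₀ (mul_ne_zero hh₀ (htw j))).1 (htP j)).symm
  have hξ : ∀ j, ξ j = (h * w j) • P j := fun j =>
    ((eq_inv_smul_iff₀ (mul_ne_zero hh₀ (hw j))).1 (hP j)).symm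
  have hincr : ∀ j, A j *ᵥ tξ j + B j *ᵥ ξ j
      = (h * tw j) • (A j *ᵥ tP j) + (h * w j) • (B j *ᵥ P j) := fun j => by
    rw [htξ, hξ, mulVec_smul, mulVec_smul]
  simp only [hincr] at hξ1 hξ2 hpn
  refine ⟨fun i => ?_, fun i => ?_, eq_sub_smul_sum_sub_smul_sum _ _ _ _ hpn⟩
  · simp only [htP i, hξ1 i, htα, hα]
    exact inv_smul_stage_eq hh₀ (htw i) _ _ _ _ _ hpn
  · simp only [hP i, hξ2 i, htβ, hβ]
    exact inv_smul_stage_eq hh₀ (hw i) _ _ _ _ _ hpn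

/-- The discrete adjoint system of (SRK2) is, after the variable transformation
`P̃^(i) = ξ̃^(i)/(h ω̃_i)`, `P^(i) = ξ^(i)/(h ω_i)`, equivalent to the adjoint
IMEX Runge–Kutta scheme (ARK). -/
theorem adjoint_srk2_to_ark (s d : ℕ) (hs : 1 ≤ s) (hd : 1 ≤ d)
    (ta a : Fin s → Fin s → ℝ) (tw w : Fin s → ℝ)
    (hta : ∀ i j : Fin s, i ≤ j → ta i j = 0)
    (ha : ∀ i j : Fin s, i < j → a i j = 0)
    (htw : ∀ i, tw i ≠ 0) (hw : ∀ i, w i ≠ 0)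
    (tα α tβ β : Fin s → Fin s → ℝ)
    (htα : ∀ i j, tα i j = tw j - (tw j / tw i) * ta j i)
    (hα : ∀ i j, α i j = w j - (w j / tw i) * ta j i)
    (htβ : ∀ i j, tβ i j = tw j - (tw j / w i) * a j i)
    (hβ : ∀ i j, β i j = w j - (w j / w i) * a j i)
    (A B : Fin s → Matrix (Fin d) (Fin d) ℝ)
    (h : ℝ) (hh : 0 < h) (pn1 : Fin d → ℝ)
    (tξ ξ : Fin s → Fin d → ℝ)
    (hξ1 : ∀ i, tξ i = (h * tw i) • pn1
        + h • ∑ j, ta j i • (A j *ᵥ tξ j + B j *ᵥ ξ j))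
    (hξ2 : ∀ i, ξ i = (h * w i) • pn1
        + h • ∑ j, a j i • (A j *ᵥ tξ j + B j *ᵥ ξ j))
    (pn : Fin d → ℝ)
    (hpn : pn = pn1 + ∑ i, (A i *ᵥ tξ i + B i *ᵥ ξ i))
    (tP P : Fin s → Fin d → ℝ)
    (htP : ∀ i, tP i = (h * tw i)⁻¹ • tξ i)
    (hP : ∀ i, P i = (h * w i)⁻¹ • ξ i) :
    (∀ i, tP i = pn - h • ∑ j, tα i j • (A j *ᵥ tP j)
                    - h • ∑ j, α i j • (B j *ᵥ P j)) ∧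
    (∀ i, P i = pn - h • ∑ j, tβ i j • (A j *ᵥ tP j)
                   - h • ∑ j, β i j • (B j *ᵥ P j)) ∧
    pn1 = pn - h • ∑ i, tw i • (A i *ᵥ tP i) - h • ∑ i, w i • (B i *ᵥ P i) :=
  adjoint_srk2_to_ark_general s d ta a tw w htw hw tα α tβ β htα hα htβ hβ A B h hh pn1 tξ ξ hξ1 hξ2
    pn hpn tP P htP hP
end

section
/- Let d ≥ 1, let A_1,…,A_s and B_1,…,B_s be real d×d matrices, h > 0, and p_{n+1} ∈ ℝ^d. Suppose ζ^(1),…,ζ^(s) ∈ ℝ^d satisfy the discrete adjoint system of (SRK1): ζ^(i) = h (ω̃_i A_i + ω_i B_i) p_{n+1} + h Σ_{j=1}^{s} ã_{ji} A_i ζ^(j) + h Σ_{j=1}^{s} a_{ji} B_i ζ^(j) for i = 1,…,s, together with p_n = p_{n+1} + Σ_{i=1}^{s} ζ^(i). Define P̃^(i) := p_{n+1} + Σ_{j=1}^{s} (ã_{ji}/ω̃_i) ζ^(j) and P^(i) := p_{n+1} + Σ_{j=1}^{s} (a_{ji}/ω_i) ζ^(j). Then ζ^(i) = h ω̃_i A_i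 P̃^(i) + h ω_i B_i P^(i) for all i, and (P̃^(i), P^(i), p_n, p_{n+1}) satisfy the adjoint IMEX Runge–Kutta scheme (ARK): P̃^(i) = p_n − h Σ_{j=1}^{s} α̃_{ij} A_j P̃^(j) − h Σ_{j=1}^{s} α_{ij} B_j P^(j), P^(i) = p_n − h Σ_{j=1}^{s} β̃_{ij} A_j P̃^(j) − h Σ_{j=1}^{s} β_{ij} B_j P^(j) for i = 1,…,s, and p_{n+1} = p_n − h Σ_{i=1}^{s} ω̃_i A_i P̃^(i) − h Σ_{i=1}^{s} ω_i B_i P^(i). -/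
/-! Substituting the definitions of `P̃^(i)` and `P^(i)` into the adjoint stage equations gives
`ζ^(i) = h ω̃_i A_i P̃^(i) + h ω_i B_i P^(i)`. Since `p_n = p_{n+1} + Σ_j ζ^(j)`, each new variable
`p_{n+1} + Σ_j (t_j / k) ζ^(j)` equals `p_n - Σ_j (1 - t_j / k) ζ^(j)`, and inserting the formula for
`ζ^(j)` yields exactly the coefficients `α̃, α, β̃, β`; taking `t = 0` gives the update for `p_{n+1}`. -/

open Finset Matrix

section

variable {𝕜 V ι : Type*} [Field 𝕜] [AddCommGroup V] [Module 𝕜 V] [Fintype ι]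

lemma smul_mulVec_add_sum_div_smul {m n : Type*} [Fintype n] {c : 𝕜} (hc : c ≠ 0)
    (h : 𝕜) (M : Matrix m n 𝕜) (p : n → 𝕜) (t : ι → 𝕜) (ζ : ι → n → 𝕜) :
    (h * c) • (M *ᵥ (p + ∑ j, (t j / c) • ζ j))
      = (h * c) • (M *ᵥ p) + h • ∑ j, t j • (M *ᵥ ζ j) := by
  simp only [mulVec_add, mulVec_sum, mulVec_smul, smul_add, smul_sum, smul_smul]
  congr 1
  refine sum_congr rfl fun j _ => ?_
  field_simp

lemma add_sum_div_smul_eq_sub {ζ u v : ι → V} {c e : ι → 𝕜} {h : 𝕜}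
    (hζ : ∀ j, ζ j = (h * c j) • u j + (h * e j) • v j) (p : V) (t : ι → 𝕜) (k : 𝕜) :
    p + ∑ j, (t j / k) • ζ j
      = (p + ∑ j, ζ j) - h • ∑ j, (c j - c j / k * t j) • u j
          - h • ∑ j, (e j - e j / k * t j) • v j := by
  rw [sub_sub, smul_sum, smul_sum, ← sum_add_distrib, add_sub_assoc, ← sum_sub_distrib]
  congr 1
  refine sum_congr rfl fun j _ => ?_
  rw [hζ j]
  match_scalars <;> ring

end

theorem adjoint_srk1_to_ark_general (s d : ℕ)
    (ta a : Fin s → Fin s → ℝ) (tw w : Fin s → ℝ)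
    (htw : ∀ i, tw i ≠ 0) (hw : ∀ i, w i ≠ 0)
    (tα α tβ β : Fin s → Fin s → ℝ)
    (htα : ∀ i j, tα i j = tw j - (tw j / tw i) * ta j i)
    (hα : ∀ i j, α i j = w j - (w j / tw i) * ta j i)
    (htβ : ∀ i j, tβ i j = tw j - (tw j / w i) * a j i)
    (hβ : ∀ i j, β i j = w j - (w j / w i) * a j i)
    (A B : Fin s → Matrix (Fin d) (Fin d) ℝ)
    (h : ℝ) (pn1 : Fin d → ℝ)
    (ζ : Fin s → Fin d → ℝ)
    (hζ : ∀ i, ζ i = h • (tw i • (A i *ᵥ pn1) + w i • (B i *ᵥ pn1))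
        + h • ∑ j, ta j i • (A i *ᵥ ζ j) + h • ∑ j, a j i • (B i *ᵥ ζ j))
    (pn : Fin d → ℝ)
    (hpn : pn = pn1 + ∑ i, ζ i)
    (tP P : Fin s → Fin d → ℝ)
    (htP : ∀ i, tP i = pn1 + ∑ j, (ta j i / tw i) • ζ j)
    (hP : ∀ i, P i = pn1 + ∑ j, (a j i / w i) • ζ j) :
    (∀ i, ζ i = (h * tw i) • (A i *ᵥ tP i) + (h * w i) • (B i *ᵥ P i)) ∧
    (∀ i, tP i = pn - h • ∑ j, tα i j • (A j *ᵥ tP j)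
                    - h • ∑ j, α i j • (B j *ᵥ P j)) ∧
    (∀ i, P i = pn - h • ∑ j, tβ i j • (A j *ᵥ tP j)
                   - h • ∑ j, β i j • (B j *ᵥ P j)) ∧
    pn1 = pn - h • ∑ i, tw i • (A i *ᵥ tP i) - h • ∑ i, w i • (B i *ᵥ P i) := by
  have hζP : ∀ i, ζ i = (h * tw i) • (A i *ᵥ tP i) + (h * w i) • (B i *ᵥ P i) := fun i => by
    rw [hζ i, htP i, hP i, smul_mulVec_add_sum_div_smul (htw i),
      smul_mulVec_add_sum_div_smul (hw i)]
    module
  refine ⟨hζP, fun i => ?_, fun i => ?_, ?_⟩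
  · simp only [htP i, htα i, hα i, hpn]
    exact add_sum_div_smul_eq_sub hζP pn1 (ta · i) (tw i)
  · simp only [hP i, htβ i, hβ i, hpn]
    exact add_sum_div_smul_eq_sub hζP pn1 (a · i) (w i)
  · simpa [hpn] using add_sum_div_smul_eq_sub hζP pn1 0 1

/-- The discrete adjoint system of (SRK1) is, after the variable transformation
`P̃^(i) = p_{n+1} + Σ_j (ã_{ji}/ω̃_i) ζ^(j)`, `P^(i) = p_{n+1} + Σ_j (a_{ji}/ω_i) ζ^(j)`,
equivalent to the adjoint IMEX Runge–Kutta scheme (ARK). -/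
theorem adjoint_srk1_to_ark (s d : ℕ) (hs : 1 ≤ s) (hd : 1 ≤ d)
    (ta a : Fin s → Fin s → ℝ) (tw w : Fin s → ℝ)
    (hta : ∀ i j : Fin s, i ≤ j → ta i j = 0)
    (ha : ∀ i j : Fin s, i < j → a i j = 0)
    (htw : ∀ i, tw i ≠ 0) (hw : ∀ i, w i ≠ 0)
    (tα α tβ β : Fin s → Fin s → ℝ)
    (htα : ∀ i j, tα i j = tw j - (tw j / tw i) * ta j i)
    (hα : ∀ i j, α i j = w j - (w j / tw i) * ta j i)
    (htβ : ∀ i j, tβ i j = tw j - (tw j / w i) * a j i)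
    (hβ : ∀ i j, β i j = w j - (w j / w i) * a j i)
    (A B : Fin s → Matrix (Fin d) (Fin d) ℝ)
    (h : ℝ) (hh : 0 < h) (pn1 : Fin d → ℝ)
    (ζ : Fin s → Fin d → ℝ)
    (hζ : ∀ i, ζ i = h • (tw i • (A i *ᵥ pn1) + w i • (B i *ᵥ pn1))
        + h • ∑ j, ta j i • (A i *ᵥ ζ j) + h • ∑ j, a j i • (B i *ᵥ ζ j))
    (pn : Fin d → ℝ)
    (hpn : pn = pn1 + ∑ i, ζ i)
    (tP P : Fin s → Fin d → ℝ)
    (htP : ∀ i, tP i = pn1 + ∑ j, (ta j i / tw i) • ζ j)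
    (hP : ∀ i, P i = pn1 + ∑ j, (a j i / w i) • ζ j) :
    (∀ i, ζ i = (h * tw i) • (A i *ᵥ tP i) + (h * w i) • (B i *ᵥ P i)) ∧
    (∀ i, tP i = pn - h • ∑ j, tα i j • (A j *ᵥ tP j)
                    - h • ∑ j, α i j • (B j *ᵥ P j)) ∧
    (∀ i, P i = pn - h • ∑ j, tβ i j • (A j *ᵥ tP j)
                   - h • ∑ j, β i j • (B j *ᵥ P j)) ∧
    pn1 = pn - h • ∑ i, tw i • (A i *ᵥ tP i) - h • ∑ i, w i • (B i *ᵥ P i) :=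
  adjoint_srk1_to_ark_general s d ta a tw w htw hw tα α tβ β htα hα htβ hβ A B h pn1 ζ hζ pn hpn tP
    P htP hP
end

section
/- Let d ≥ 1, let A_1,…,A_s and B_1,…,B_s be real d×d matrices, h > 0, and p_{n+1} ∈ ℝ^d. Suppose ζ^(1),…,ζ^(s) ∈ ℝ^d satisfy the discrete adjoint system of (SRK1): ζ^(i) = h (ω̃_i A_i + ω_i B_i) p_{n+1} + h Σ_{j=1}^{s} ã_{ji} A_i ζ^(j) + h Σ_{j=1}^{s} a_{ji} B_i ζ^(j) for i = 1,…,s. Define P̃^(i) := p_{n+1} + Σ_{j=1}^{s} (ã_{ji}/ω̃_i) ζ^(j), P^(i) := p_{n+1} + Σ_{j=1}^{s} (a_{ji}/ω_i) ζ^(j), and set ξ̃^(i) := h ω̃_i P̃^(i) and ξ^(i) := h ω_i P^(i). Then (ξ̃^(i), ξ^(i)) satisfy the discrete adjoint system of (SRK2): ξ̃^(i) = h ω̃_i p_{n+1} + h Σ_{j=1}^{s} ã_{ji} (A_j ξ̃^(j) + B_j ξ^(j)) and ξ^(i) = h ω_i p_{n+1} + h Σ_{j=1}^{s} a_{ji}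 (A_j ξ̃^(j) + B_j ξ^(j)) for all i, and moreover Σ_{i=1}^{s} (A_i ξ̃^(i) + B_i ξ^(i)) = Σ_{i=1}^{s} ζ^(i); in particular the two discrete optimality systems produce the same value p_n = p_{n+1} + Σ_{i=1}^{s} ζ^(i) = p_{n+1} + Σ_{i=1}^{s} (A_i ξ̃^(i) + B_i ξ^(i)), i.e. the discrete optimality systems associated with (SRK1) and with (SRK2) coincide. -/
open Finset Matrix

/-!
Writing `ξ̃^(j) = h ω̃_j P̃^(j)` and `ξ^(j) = h ω_j P^(j)` and cancelling the weights, the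
combination `A_j ξ̃^(j) + B_j ξ^(j)` is exactly the right-hand side of the (SRK1) adjoint
equation for `ζ^(j)`, so it equals `ζ^(j)`. Substituting this back turns the definitions of
`ξ̃^(i)` and `ξ^(i)` into the (SRK2) adjoint equations, and summing over `j` gives the
common update `p_n`.
-/

theorem smul_add_sum_div_smul {K E ι : Type*} [Field K] [AddCommGroup E] [Module K E]
    (s : Finset ι) {c : K} (hc : c ≠ 0) (h : K) (p : E) (x : ι → K) (v : ι → E) :
    (h * c) • (p + ∑ j ∈ s, (x j / c) • v j) = (h * c) • p + h • ∑ j ∈ s, x j • v j := by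
  rw [smul_add, smul_sum, smul_sum]
  congr 1
  refine sum_congr rfl fun j _ => ?_
  rw [smul_smul, smul_smul]
  field_simp

theorem mulVec_smul_add_sum_div_smul {K m n ι : Type*} [Field K] [Fintype n]
    (M : Matrix m n K) (s : Finset ι) {c : K} (hc : c ≠ 0) (h : K) (p : n → K) (x : ι → K)
    (v : ι → n → K) :
    M *ᵥ ((h * c) • (p + ∑ j ∈ s, (x j / c) • v j))
      = (h * c) • (M *ᵥ p) + h • ∑ j ∈ s, x j • (M *ᵥ v j) := by
  rw [mulVec_smul, mulVec_add, mulVec_sum, ← smul_add_sum_div_smul s hc]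
  simp only [mulVec_smul]

theorem adjoint_srk1_srk2_coincide_general (s d : ℕ)
    (ta a : Fin s → Fin s → ℝ) (tw w : Fin s → ℝ)
    (htw : ∀ i, tw i ≠ 0) (hw : ∀ i, w i ≠ 0)
    (A B : Fin s → Matrix (Fin d) (Fin d) ℝ)
    (h : ℝ) (pn1 : Fin d → ℝ)
    (ζ : Fin s → Fin d → ℝ)
    (hζ : ∀ i, ζ i = h • (tw i • (A i *ᵥ pn1) + w i • (B i *ᵥ pn1))
        + h • ∑ j, ta j i • (A i *ᵥ ζ j) + h • ∑ j, a j i • (B i *ᵥ ζ j))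
    (tP P : Fin s → Fin d → ℝ)
    (htP : ∀ i, tP i = pn1 + ∑ j, (ta j i / tw i) • ζ j)
    (hP : ∀ i, P i = pn1 + ∑ j, (a j i / w i) • ζ j)
    (tξ ξ : Fin s → Fin d → ℝ)
    (htξ : ∀ i, tξ i = (h * tw i) • tP i)
    (hξ : ∀ i, ξ i = (h * w i) • P i) :
    (∀ i, tξ i = (h * tw i) • pn1
        + h • ∑ j, ta j i • (A j *ᵥ tξ j + B j *ᵥ ξ j)) ∧
    (∀ i, ξ i = (h * w i) • pn1
        + h • ∑ j, a j i • (A j *ᵥ tξ j + B j *ᵥ ξ j)) ∧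
    (∑ i, (A i *ᵥ tξ i + B i *ᵥ ξ i)) = ∑ i, ζ i ∧
    pn1 + ∑ i, ζ i = pn1 + ∑ i, (A i *ᵥ tξ i + B i *ᵥ ξ i) := by
  have hstage : ∀ j, A j *ᵥ tξ j + B j *ᵥ ξ j = ζ j := fun j => by
    rw [htξ, htP, hξ, hP, mulVec_smul_add_sum_div_smul _ _ (htw j),
      mulVec_smul_add_sum_div_smul _ _ (hw j), hζ j]
    module
  have hsum : ∑ i, (A i *ᵥ tξ i + B i *ᵥ ξ i) = ∑ i, ζ i := sum_congr rfl fun i _ => hstage i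
  refine ⟨fun i => ?_, fun i => ?_, hsum, by rw [hsum]⟩
  · simp only [hstage]
    rw [htξ, htP, smul_add_sum_div_smul _ (htw i)]
  · simp only [hstage]
    rw [hξ, hP, smul_add_sum_div_smul _ (hw i)]

/-- The discrete optimality systems associated with (SRK1) and (SRK2)
coincide: the transformed stage multipliers `ξ̃^(i) = h ω̃_i P̃^(i)`,
`ξ^(i) = h ω_i P^(i)` built from a solution `ζ` of the discrete adjoint
system of (SRK1) solve the discrete adjoint system of (SRK2), and both
produce the same adjoint update `p_n`. -/
theorem adjoint_srk1_srk2_coincide (s d : ℕ) (hs : 1 ≤ s) (hd : 1 ≤ d)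
    (ta a : Fin s → Fin s → ℝ) (tw w : Fin s → ℝ)
    (hta : ∀ i j : Fin s, i ≤ j → ta i j = 0)
    (ha : ∀ i j : Fin s, i < j → a i j = 0)
    (htw : ∀ i, tw i ≠ 0) (hw : ∀ i, w i ≠ 0)
    (A B : Fin s → Matrix (Fin d) (Fin d) ℝ)
    (h : ℝ) (hh : 0 < h) (pn1 : Fin d → ℝ)
    (ζ : Fin s → Fin d → ℝ)
    (hζ : ∀ i, ζ i = h • (tw i • (A i *ᵥ pn1) + w i • (B i *ᵥ pn1))
        + h • ∑ j, ta j i • (A i *ᵥ ζ j) + h • ∑ j, a j i • (B i *ᵥ ζ j))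
    (tP P : Fin s → Fin d → ℝ)
    (htP : ∀ i, tP i = pn1 + ∑ j, (ta j i / tw i) • ζ j)
    (hP : ∀ i, P i = pn1 + ∑ j, (a j i / w i) • ζ j)
    (tξ ξ : Fin s → Fin d → ℝ)
    (htξ : ∀ i, tξ i = (h * tw i) • tP i)
    (hξ : ∀ i, ξ i = (h * w i) • P i) :
    (∀ i, tξ i = (h * tw i) • pn1
        + h • ∑ j, ta j i • (A j *ᵥ tξ j + B j *ᵥ ξ j)) ∧
    (∀ i, ξ i = (h * w i) • pn1
        + h • ∑ j, a j i • (A j *ᵥ tξ j + B j *ᵥ ξ j)) ∧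
    (∑ i, (A i *ᵥ tξ i + B i *ᵥ ξ i)) = ∑ i, ζ i ∧
    pn1 + ∑ i, ζ i = pn1 + ∑ i, (A i *ᵥ tξ i + B i *ᵥ ξ i) :=
  adjoint_srk1_srk2_coincide_general s d ta a tw w htw hw A B h pn1 ζ hζ tP P htP hP tξ ξ htξ hξ
end

section
/- (Theorem 1, first-order part.) Assume the IMEX Runge–Kutta coefficients satisfy the first-order conditions Σ_{i=1}^{s} ω̃_i = 1 and Σ_{i=1}^{s} ω_i = 1. Then the combined forward–adjoint scheme is of first order: for every exact solution (y, p̃, p) of the coupled system with p̃(0) = p(0) there exist constants C > 0 and h₀ > 0 such that for every 0 < h ≤ h₀, any one step of the combined scheme started at (y(0), p̃(0), p(0)) with p̃_n = p_n, whose stage values Y^(i), P̃^(i), P^(i) satisfy the stage equations and lie within distance 1 of y(0) and p(0) respectively, satisfies ‖y_{n+1} − y(h)‖ + ‖p̃_{n+1} − p̃(h)‖ + ‖p_{n+1} − p(h)‖ ≤ C h². -/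
open Finset Matrix

/-- The Jacobian matrix of a map `g : ℝ^d → ℝ^d` at `x`:
entry `(i, j)` is `∂ g_i / ∂ x_j (x)`. -/
noncomputable def jacMat {d : ℕ} (g : (Fin d → ℝ) → (Fin d → ℝ))
    (x : Fin d → ℝ) : Matrix (Fin d) (Fin d) ℝ :=
  fun i j => fderiv ℝ g x (Pi.single j 1) i


section AuxIMEX

variable {E F : Type*} [NormedAddCommGroup E] [NormedSpace ℝ E]
  [NormedAddCommGroup F] [NormedSpace ℝ F]

private lemma norm_fderiv_le_one (f : E → F) (x : E) :
    ‖fderiv ℝ f x‖ ≤ ‖iteratedFDeriv ℝ 1 f x‖ := by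
  refine ContinuousLinearMap.opNorm_le_bound _ (norm_nonneg _) fun v => ?_
  have h : fderiv ℝ f x v = iteratedFDeriv ℝ 1 f x (fun _ => v) := by
    rw [iteratedFDeriv_one_apply]
  rw [h]
  calc ‖iteratedFDeriv ℝ 1 f x fun _ => v‖
      ≤ ‖iteratedFDeriv ℝ 1 f x‖ * ∏ _i : Fin 1, ‖v‖ :=
        ContinuousMultilinearMap.le_opNorm _ _
    _ = ‖iteratedFDeriv ℝ 1 f x‖ * ‖v‖ := by simp

private lemma norm_mulVec_le {d : ℕ} (M : Matrix (Fin d) (Fin d) ℝ) (v : Fin d → ℝ) :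
    ‖M *ᵥ v‖ ≤ (∑ i, ∑ j, |M i j|) * ‖v‖ := by
  have h0 : (0:ℝ) ≤ (∑ i, ∑ j, |M i j|) * ‖v‖ := by positivity
  rw [pi_norm_le_iff_of_nonneg h0]
  intro i
  have : (M *ᵥ v) i = ∑ j, M i j * v j := rfl
  rw [this, Real.norm_eq_abs]
  calc |∑ j, M i j * v j| ≤ ∑ j, |M i j * v j| := Finset.abs_sum_le_sum_abs _ _
    _ = ∑ j, |M i j| * |v j| := by simp [abs_mul]
    _ ≤ ∑ j, |M i j| * ‖v‖ := by
        refine Finset.sum_le_sum fun j _ => ?_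
        exact mul_le_mul_of_nonneg_left ((Real.norm_eq_abs _).symm ▸ norm_le_pi_norm v j) (abs_nonneg _)
    _ = (∑ j, |M i j|) * ‖v‖ := by rw [Finset.sum_mul]
    _ ≤ (∑ i, ∑ j, |M i j|) * ‖v‖ := by
        refine mul_le_mul_of_nonneg_right ?_ (norm_nonneg _)
        exact Finset.single_le_sum (f := fun k => ∑ j, |M k j|)
          (fun k _ => Finset.sum_nonneg fun j _ => abs_nonneg _) (Finset.mem_univ i)

private lemma norm_mulVec_le' {d : ℕ} (M : Matrix (Fin d) (Fin d) ℝ) {c : ℝ}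
    (hc : ∀ i j, |M i j| ≤ c) (v : Fin d → ℝ) :
    ‖M *ᵥ v‖ ≤ ((d:ℝ) * d * c) * ‖v‖ := by
  refine (norm_mulVec_le M v).trans ?_
  refine mul_le_mul_of_nonneg_right ?_ (norm_nonneg _)
  calc ∑ i, ∑ j, |M i j| ≤ ∑ _i : Fin d, ∑ _j : Fin d, c :=
        Finset.sum_le_sum fun i _ => Finset.sum_le_sum fun j _ => hc i j
    _ = (d:ℝ) * d * c := by simp [Finset.sum_const, card_univ]; ring

private lemma taylor_one {f f' : ℝ → E} (hf : ∀ t, HasDerivAt f (f' t) t) {b K : ℝ}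
    (hb : 0 ≤ b) (hK : ∀ t ∈ Set.Icc (0:ℝ) b, ‖f' t - f' 0‖ ≤ K) :
    ‖f b - f 0 - b • f' 0‖ ≤ K * b := by
  have hder : ∀ t ∈ Set.Icc (0:ℝ) b,
      HasDerivWithinAt (fun t => f t - t • f' 0) (f' t - f' 0) (Set.Icc 0 b) t := by
    intro t _
    have h1 : HasDerivAt (fun t : ℝ => t • f' 0) ((1:ℝ) • f' 0) t :=
      (hasDerivAt_id t).smul_const (f' 0)
    rw [one_smul] at h1
    exact ((hf t).sub h1).hasDerivWithinAt
  have := norm_image_sub_le_of_norm_deriv_le_segment' hder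
    (fun t ht => hK t (Set.Ico_subset_Icc_self ht)) b (Set.right_mem_Icc.mpr hb)
  simp only [zero_smul, sub_zero] at this
  calc ‖f b - f 0 - b • f' 0‖ = ‖(f b - b • f' 0) - f 0‖ := by rw [sub_right_comm]
    _ ≤ K * b := by simpa using this

private lemma norm_sub_self_le {f f' : ℝ → E} (hf : ∀ t, HasDerivAt f (f' t) t) {b M : ℝ}
    (hM : ∀ t ∈ Set.Icc (0:ℝ) b, ‖f' t‖ ≤ M) :
    ∀ t ∈ Set.Icc (0:ℝ) b, ‖f t - f 0‖ ≤ M * t := by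
  intro t ht
  have := norm_image_sub_le_of_norm_deriv_le_segment'
    (f' := f') (fun u _ => (hf u).hasDerivWithinAt)
    (fun u hu => hM u (Set.Ico_subset_Icc_self hu)) t ht
  simpa using this

private lemma helper_sum {s : ℕ} (c : Fin s → Fin s → ℝ) (i : Fin s) (f : Fin s → E) {B : ℝ}
    (hB : ∀ j, ‖f j‖ ≤ B) (T : Finset (Fin s)) :
    ‖∑ j ∈ T, c i j • f j‖ ≤ (∑ k, ∑ j, |c k j|) * B := by
  have hB0 : 0 ≤ B := le_trans (norm_nonneg (f i)) (hB i)
  calc ‖∑ j ∈ T, c i j • f j‖ ≤ ∑ j ∈ T, |c i j| * B := by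
        refine (norm_sum_le _ _).trans (Finset.sum_le_sum fun j _ => ?_)
        rw [norm_smul, Real.norm_eq_abs]
        exact mul_le_mul_of_nonneg_left (hB j) (abs_nonneg _)
    _ ≤ ∑ j, |c i j| * B := Finset.sum_le_sum_of_subset_of_nonneg (Finset.subset_univ T)
        (fun j _ _ => mul_nonneg (abs_nonneg _) hB0)
    _ = (∑ j, |c i j|) * B := (Finset.sum_mul _ _ _).symm
    _ ≤ (∑ k, ∑ j, |c k j|) * B := mul_le_mul_of_nonneg_right
        (Finset.single_le_sum (f := fun k => ∑ j, |c k j|)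
          (fun k _ => Finset.sum_nonneg fun j _ => abs_nonneg _) (Finset.mem_univ i)) hB0

private lemma helper_sum1 {s : ℕ} (c : Fin s → ℝ) (f : Fin s → E) {B : ℝ}
    (hB : ∀ j, ‖f j‖ ≤ B) :
    ‖∑ j, c j • f j‖ ≤ (∑ j, |c j|) * B := by
  calc ‖∑ j, c j • f j‖ ≤ ∑ j, |c j| * B := by
        refine (norm_sum_le _ _).trans (Finset.sum_le_sum fun j _ => ?_)
        rw [norm_smul, Real.norm_eq_abs]
        exact mul_le_mul_of_nonneg_left (hB j) (abs_nonneg _)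
    _ = (∑ j, |c j|) * B := (Finset.sum_mul _ _ _).symm

end AuxIMEX

set_option maxHeartbeats 2000000 in
/-- Theorem 1, first-order part: if the IMEX Runge–Kutta method satisfies the
first-order conditions, then one step of the combined forward–adjoint scheme
has a local error of order `h²`. -/
theorem imex_adjoint_first_order (s d : ℕ) (hs : 1 ≤ s) (hd : 1 ≤ d)
    (ta a : Fin s → Fin s → ℝ) (tw w : Fin s → ℝ)
    (hta : ∀ i j : Fin s, i ≤ j → ta i j = 0)
    (ha : ∀ i j : Fin s, i < j → a i j = 0)
    (htw0 : ∀ i, tw i ≠ 0) (hw0 : ∀ i, w i ≠ 0)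
    (tα α tβ β : Fin s → Fin s → ℝ)
    (htα : ∀ i j, tα i j = tw j - (tw j / tw i) * ta j i)
    (hα : ∀ i j, α i j = w j - (w j / tw i) * ta j i)
    (htβ : ∀ i j, tβ i j = tw j - (tw j / w i) * a j i)
    (hβ : ∀ i j, β i j = w j - (w j / w i) * a j i)
    (ε : ℝ) (hε : 0 < ε)
    (D Dbar : Matrix (Fin d) (Fin d) ℝ)
    (g r : (Fin d → ℝ) → (Fin d → ℝ))
    (hg : ContDiff ℝ (⊤ : ℕ∞) g) (hr : ContDiff ℝ (⊤ : ℕ∞) r)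
    (hgb : ∀ n : ℕ, ∃ C, ∀ x, ‖iteratedFDeriv ℝ n g x‖ ≤ C)
    (hrb : ∀ n : ℕ, ∃ C, ∀ x, ‖iteratedFDeriv ℝ n r x‖ ≤ C)
    -- first-order conditions
    (hord1 : ∑ i, tw i = 1) (hord1' : ∑ i, w i = 1)
    -- exact solution of the coupled forward–adjoint system
    (y pt p : ℝ → Fin d → ℝ)
    (hy : ∀ t, HasDerivAt y (D *ᵥ g (y t) + ε⁻¹ • r (y t)) t)
    (hpt : ∀ t, HasDerivAt pt
      (-(((jacMat g (y t))ᵀ * Dbar) *ᵥ pt t)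
        - ε⁻¹ • ((jacMat r (y t))ᵀ *ᵥ p t)) t)
    (hp : ∀ t, HasDerivAt p
      (-(((jacMat g (y t))ᵀ * Dbar) *ᵥ pt t)
        - ε⁻¹ • ((jacMat r (y t))ᵀ *ᵥ p t)) t)
    (h0eq : pt 0 = p 0) :
    ∃ C > (0:ℝ), ∃ h₀ > (0:ℝ), ∀ h : ℝ, 0 < h → h ≤ h₀ →
      ∀ Y tP P : Fin s → Fin d → ℝ,
      (∀ i, Y i = y 0
          + h • ∑ j ∈ univ.filter (fun j => j < i), ta i j • (D *ᵥ g (Y j))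
          + h • ∑ j ∈ univ.filter (fun j => j ≤ i), a i j • (ε⁻¹ • r (Y j))) →
      (∀ i, tP i = p 0
          - h • ∑ j, tα i j • (((jacMat g (Y j))ᵀ * Dbar) *ᵥ tP j)
          - h • ∑ j, α i j • (ε⁻¹ • ((jacMat r (Y j))ᵀ *ᵥ P j))) →
      (∀ i, P i = p 0
          - h • ∑ j, tβ i j • (((jacMat g (Y j))ᵀ * Dbar) *ᵥ tP j)
          - h • ∑ j, β i j • (ε⁻¹ • ((jacMat r (Y j))ᵀ *ᵥ P j))) →
      (∀ i, ‖Y i - y 0‖ ≤ 1 ∧ ‖tP i - p 0‖ ≤ 1 ∧ ‖P i - p 0‖ ≤ 1) →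
      ‖(y 0 + h • ∑ i, tw i • (D *ᵥ g (Y i))
            + h • ∑ i, w i • (ε⁻¹ • r (Y i))) - y h‖
      + ‖(pt 0 - h • ∑ i, tw i • (((jacMat g (Y i))ᵀ * Dbar) *ᵥ tP i)
               - h • ∑ i, w i • (ε⁻¹ • ((jacMat r (Y i))ᵀ *ᵥ P i))) - pt h‖
      + ‖(p 0 - h • ∑ i, tw i • (((jacMat g (Y i))ᵀ * Dbar) *ᵥ tP i)
              - h • ∑ i, w i • (ε⁻¹ • ((jacMat r (Y i))ᵀ *ᵥ P i))) - p h‖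
      ≤ C * h ^ 2 := by
  -- pointwise derivative bounds with absolute-value constants
  obtain ⟨Mg0', hMg0'⟩ := hgb 0
  obtain ⟨Mg1', hMg1'⟩ := hgb 1
  obtain ⟨Mg2', hMg2'⟩ := hgb 2
  obtain ⟨Mr0', hMr0'⟩ := hrb 0
  obtain ⟨Mr1', hMr1'⟩ := hrb 1
  obtain ⟨Mr2', hMr2'⟩ := hrb 2
  have hMg0 : ∀ x, ‖g x‖ ≤ |Mg0'| := fun x => by
    have := hMg0' x; rw [norm_iteratedFDeriv_zero] at this; exact this.trans (le_abs_self _)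
  have hMr0 : ∀ x, ‖r x‖ ≤ |Mr0'| := fun x => by
    have := hMr0' x; rw [norm_iteratedFDeriv_zero] at this; exact this.trans (le_abs_self _)
  have hMg1 : ∀ x, ‖fderiv ℝ g x‖ ≤ |Mg1'| := fun x =>
    (norm_fderiv_le_one g x).trans ((hMg1' x).trans (le_abs_self _))
  have hMr1 : ∀ x, ‖fderiv ℝ r x‖ ≤ |Mr1'| := fun x =>
    (norm_fderiv_le_one r x).trans ((hMr1' x).trans (le_abs_self _))
  have hMg2 : ∀ x, ‖fderiv ℝ (fderiv ℝ g) x‖ ≤ |Mg2'| := fun x => by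
    refine (norm_fderiv_le_one _ x).trans ?_
    rw [norm_iteratedFDeriv_fderiv]
    exact (hMg2' x).trans (le_abs_self _)
  have hMr2 : ∀ x, ‖fderiv ℝ (fderiv ℝ r) x‖ ≤ |Mr2'| := fun x => by
    refine (norm_fderiv_le_one _ x).trans ?_
    rw [norm_iteratedFDeriv_fderiv]
    exact (hMr2' x).trans (le_abs_self _)
  -- differentiability
  have hgd : Differentiable ℝ g := hg.differentiable (by simp)
  have hrd : Differentiable ℝ r := hr.differentiable (by simp)
  have hgd2 : Differentiable ℝ (fderiv ℝ g) := (hg.fderiv_right (m := (⊤ : ℕ∞)) (by simp)).differentiable (by simp)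
  have hrd2 : Differentiable ℝ (fderiv ℝ r) := (hr.fderiv_right (m := (⊤ : ℕ∞)) (by simp)).differentiable (by simp)
  -- Lipschitz bounds
  have hgL : ∀ x x' : Fin d → ℝ, ‖g x - g x'‖ ≤ |Mg1'| * ‖x - x'‖ := fun x x' =>
    Convex.norm_image_sub_le_of_norm_fderiv_le (fun z _ => hgd z) (fun z _ => hMg1 z)
      convex_univ (Set.mem_univ x') (Set.mem_univ x)
  have hrL : ∀ x x' : Fin d → ℝ, ‖r x - r x'‖ ≤ |Mr1'| * ‖x - x'‖ := fun x x' =>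
    Convex.norm_image_sub_le_of_norm_fderiv_le (fun z _ => hrd z) (fun z _ => hMr1 z)
      convex_univ (Set.mem_univ x') (Set.mem_univ x)
  have hgL2 : ∀ x x' : Fin d → ℝ, ‖fderiv ℝ g x - fderiv ℝ g x'‖ ≤ |Mg2'| * ‖x - x'‖ :=
    fun x x' => Convex.norm_image_sub_le_of_norm_fderiv_le (fun z _ => hgd2 z)
      (fun z _ => hMg2 z) convex_univ (Set.mem_univ x') (Set.mem_univ x)
  have hrL2 : ∀ x x' : Fin d → ℝ, ‖fderiv ℝ r x - fderiv ℝ r x'‖ ≤ |Mr2'| * ‖x - x'‖ :=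
    fun x x' => Convex.norm_image_sub_le_of_norm_fderiv_le (fun z _ => hrd2 z)
      (fun z _ => hMr2 z) convex_univ (Set.mem_univ x') (Set.mem_univ x)
  -- entrywise bounds on the Jacobians
  have hjg : ∀ (x : Fin d → ℝ) i j, |jacMat g x i j| ≤ |Mg1'| := by
    intro x i j
    have h1 : |jacMat g x i j| ≤ ‖fderiv ℝ g x (Pi.single j 1)‖ := by
      rw [show |jacMat g x i j| = ‖fderiv ℝ g x (Pi.single j 1) i‖ from (Real.norm_eq_abs _).symm]
      exact norm_le_pi_norm _ i
    refine h1.trans ?_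
    calc ‖fderiv ℝ g x (Pi.single j 1)‖ ≤ ‖fderiv ℝ g x‖ * ‖(Pi.single j 1 : Fin d → ℝ)‖ :=
          ContinuousLinearMap.le_opNorm _ _
      _ ≤ |Mg1'| := by rw [Pi.norm_single, norm_one, mul_one]; exact hMg1 x
  have hjr : ∀ (x : Fin d → ℝ) i j, |jacMat r x i j| ≤ |Mr1'| := by
    intro x i j
    have h1 : |jacMat r x i j| ≤ ‖fderiv ℝ r x (Pi.single j 1)‖ := by
      rw [show |jacMat r x i j| = ‖fderiv ℝ r x (Pi.single j 1) i‖ from (Real.norm_eq_abs _).symm]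
      exact norm_le_pi_norm _ i
    refine h1.trans ?_
    calc ‖fderiv ℝ r x (Pi.single j 1)‖ ≤ ‖fderiv ℝ r x‖ * ‖(Pi.single j 1 : Fin d → ℝ)‖ :=
          ContinuousLinearMap.le_opNorm _ _
      _ ≤ |Mr1'| := by rw [Pi.norm_single, norm_one, mul_one]; exact hMr1 x
  have hjgd : ∀ (x x' : Fin d → ℝ) i j,
      |jacMat g x i j - jacMat g x' i j| ≤ |Mg2'| * ‖x - x'‖ := by
    intro x x' i j
    have he : jacMat g x i j - jacMat g x' i j
        = ((fderiv ℝ g x - fderiv ℝ g x') (Pi.single j 1)) i := by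
      simp [jacMat]
    rw [he]
    have h1 : |((fderiv ℝ g x - fderiv ℝ g x') (Pi.single j 1)) i|
        ≤ ‖(fderiv ℝ g x - fderiv ℝ g x') (Pi.single j 1)‖ := by
      rw [← Real.norm_eq_abs]; exact norm_le_pi_norm _ i
    refine h1.trans ?_
    calc ‖(fderiv ℝ g x - fderiv ℝ g x') (Pi.single j 1)‖
        ≤ ‖fderiv ℝ g x - fderiv ℝ g x'‖ * ‖(Pi.single j 1 : Fin d → ℝ)‖ :=
          ContinuousLinearMap.le_opNorm _ _
      _ ≤ |Mg2'| * ‖x - x'‖ := by rw [Pi.norm_single, norm_one, mul_one]; exact hgL2 x x'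
  have hjrd : ∀ (x x' : Fin d → ℝ) i j,
      |jacMat r x i j - jacMat r x' i j| ≤ |Mr2'| * ‖x - x'‖ := by
    intro x x' i j
    have he : jacMat r x i j - jacMat r x' i j
        = ((fderiv ℝ r x - fderiv ℝ r x') (Pi.single j 1)) i := by
      simp [jacMat]
    rw [he]
    have h1 : |((fderiv ℝ r x - fderiv ℝ r x') (Pi.single j 1)) i|
        ≤ ‖(fderiv ℝ r x - fderiv ℝ r x') (Pi.single j 1)‖ := by
      rw [← Real.norm_eq_abs]; exact norm_le_pi_norm _ i
    refine h1.trans ?_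
    calc ‖(fderiv ℝ r x - fderiv ℝ r x') (Pi.single j 1)‖
        ≤ ‖fderiv ℝ r x - fderiv ℝ r x'‖ * ‖(Pi.single j 1 : Fin d → ℝ)‖ :=
          ContinuousLinearMap.le_opNorm _ _
      _ ≤ |Mr2'| * ‖x - x'‖ := by rw [Pi.norm_single, norm_one, mul_one]; exact hrL2 x x'
  -- packaged constants
  obtain ⟨K1, hK1⟩ : ∃ c : ℝ, ∀ x, ‖D *ᵥ g x‖ ≤ |c| :=
    ⟨(∑ i, ∑ j, |D i j|) * |Mg0'|, fun x =>
      ((norm_mulVec_le D (g x)).trans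
        (mul_le_mul_of_nonneg_left (hMg0 x) (by positivity))).trans (le_abs_self _)⟩
  obtain ⟨K2, hK2⟩ : ∃ c : ℝ, ∀ x, ‖ε⁻¹ • r x‖ ≤ |c| := by
    refine ⟨|ε⁻¹| * |Mr0'|, fun x => ?_⟩
    rw [norm_smul, Real.norm_eq_abs]
    exact (mul_le_mul_of_nonneg_left (hMr0 x) (abs_nonneg _)).trans (le_abs_self _)
  obtain ⟨K3, hK3⟩ : ∃ c : ℝ, ∀ x q : Fin d → ℝ, ‖((jacMat g x)ᵀ * Dbar) *ᵥ q‖ ≤ |c| * ‖q‖ := by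
    refine ⟨((d:ℝ) * d * |Mg1'|) * (∑ i, ∑ j, |Dbar i j|), fun x q => ?_⟩
    rw [← Matrix.mulVec_mulVec]
    calc ‖(jacMat g x)ᵀ *ᵥ (Dbar *ᵥ q)‖
        ≤ ((d:ℝ) * d * |Mg1'|) * ‖Dbar *ᵥ q‖ :=
          norm_mulVec_le' _ (fun i j => by simpa [Matrix.transpose_apply] using hjg x j i) _
      _ ≤ ((d:ℝ) * d * |Mg1'|) * ((∑ i, ∑ j, |Dbar i j|) * ‖q‖) :=
          mul_le_mul_of_nonneg_left (norm_mulVec_le _ _) (by positivity)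
      _ = (((d:ℝ) * d * |Mg1'|) * (∑ i, ∑ j, |Dbar i j|)) * ‖q‖ := by ring
      _ ≤ abs (((d:ℝ) * d * |Mg1'|) * (∑ i, ∑ j, |Dbar i j|)) * ‖q‖ :=
          mul_le_mul_of_nonneg_right (le_abs_self _) (norm_nonneg _)
  obtain ⟨K4, hK4⟩ : ∃ c : ℝ, ∀ x q : Fin d → ℝ,
      ‖ε⁻¹ • ((jacMat r x)ᵀ *ᵥ q)‖ ≤ |c| * ‖q‖ := by
    refine ⟨|ε⁻¹| * ((d:ℝ) * d * |Mr1'|), fun x q => ?_⟩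
    rw [norm_smul, Real.norm_eq_abs]
    calc |ε⁻¹| * ‖(jacMat r x)ᵀ *ᵥ q‖
        ≤ |ε⁻¹| * (((d:ℝ) * d * |Mr1'|) * ‖q‖) := mul_le_mul_of_nonneg_left
          (norm_mulVec_le' _ (fun i j => by simpa [Matrix.transpose_apply] using hjr x j i) q)
          (abs_nonneg _)
      _ = (|ε⁻¹| * ((d:ℝ) * d * |Mr1'|)) * ‖q‖ := by ring
      _ ≤ abs (|ε⁻¹| * ((d:ℝ) * d * |Mr1'|)) * ‖q‖ :=
          mul_le_mul_of_nonneg_right (le_abs_self _) (norm_nonneg _)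
  obtain ⟨K5, hK5⟩ : ∃ c : ℝ, ∀ x x' : Fin d → ℝ,
      ‖D *ᵥ (g x - g x')‖ ≤ |c| * ‖x - x'‖ := by
    refine ⟨(∑ i, ∑ j, |D i j|) * |Mg1'|, fun x x' => ?_⟩
    calc ‖D *ᵥ (g x - g x')‖ ≤ (∑ i, ∑ j, |D i j|) * ‖g x - g x'‖ := norm_mulVec_le _ _
      _ ≤ (∑ i, ∑ j, |D i j|) * (|Mg1'| * ‖x - x'‖) :=
          mul_le_mul_of_nonneg_left (hgL x x') (by positivity)
      _ = ((∑ i, ∑ j, |D i j|) * |Mg1'|) * ‖x - x'‖ := by ring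
      _ ≤ abs ((∑ i, ∑ j, |D i j|) * |Mg1'|) * ‖x - x'‖ :=
          mul_le_mul_of_nonneg_right (le_abs_self _) (norm_nonneg _)
  obtain ⟨K6, hK6⟩ : ∃ c : ℝ, ∀ x x' : Fin d → ℝ,
      ‖ε⁻¹ • (r x - r x')‖ ≤ |c| * ‖x - x'‖ := by
    refine ⟨|ε⁻¹| * |Mr1'|, fun x x' => ?_⟩
    rw [norm_smul, Real.norm_eq_abs]
    calc |ε⁻¹| * ‖r x - r x'‖ ≤ |ε⁻¹| * (|Mr1'| * ‖x - x'‖) :=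
          mul_le_mul_of_nonneg_left (hrL x x') (abs_nonneg _)
      _ = (|ε⁻¹| * |Mr1'|) * ‖x - x'‖ := by ring
      _ ≤ abs (|ε⁻¹| * |Mr1'|) * ‖x - x'‖ :=
          mul_le_mul_of_nonneg_right (le_abs_self _) (norm_nonneg _)
  obtain ⟨K7, hK7⟩ : ∃ c : ℝ, ∀ x x' q q' : Fin d → ℝ,
      ‖((jacMat g x)ᵀ * Dbar) *ᵥ q - ((jacMat g x')ᵀ * Dbar) *ᵥ q'‖
        ≤ |c| * (‖x - x'‖ * ‖q‖) + |K3| * ‖q - q'‖ := by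
    refine ⟨((d:ℝ) * d * |Mg2'|) * (∑ i, ∑ j, |Dbar i j|), fun x x' q q' => ?_⟩
    have he : ((jacMat g x)ᵀ * Dbar) *ᵥ q - ((jacMat g x')ᵀ * Dbar) *ᵥ q'
        = ((jacMat g x)ᵀ - (jacMat g x')ᵀ) *ᵥ (Dbar *ᵥ q)
          + ((jacMat g x')ᵀ * Dbar) *ᵥ (q - q') := by
      simp only [Matrix.mulVec_mulVec, Matrix.sub_mul, Matrix.sub_mulVec, Matrix.mulVec_sub]
      abel
    rw [he]
    refine (norm_add_le _ _).trans (add_le_add ?_ (hK3 x' (q - q')))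
    have hent : ∀ i j, |((jacMat g x)ᵀ - (jacMat g x')ᵀ) i j| ≤ |Mg2'| * ‖x - x'‖ :=
      fun i j => by simpa [Matrix.transpose_apply, Matrix.sub_apply] using hjgd x x' j i
    calc ‖((jacMat g x)ᵀ - (jacMat g x')ᵀ) *ᵥ (Dbar *ᵥ q)‖
        ≤ ((d:ℝ) * d * (|Mg2'| * ‖x - x'‖)) * ‖Dbar *ᵥ q‖ := norm_mulVec_le' _ hent _
      _ ≤ ((d:ℝ) * d * (|Mg2'| * ‖x - x'‖)) * ((∑ i, ∑ j, |Dbar i j|) * ‖q‖) :=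
          mul_le_mul_of_nonneg_left (norm_mulVec_le _ _) (by positivity)
      _ = (((d:ℝ) * d * |Mg2'|) * (∑ i, ∑ j, |Dbar i j|)) * (‖x - x'‖ * ‖q‖) := by ring
      _ ≤ abs (((d:ℝ) * d * |Mg2'|) * (∑ i, ∑ j, |Dbar i j|)) * (‖x - x'‖ * ‖q‖) :=
          mul_le_mul_of_nonneg_right (le_abs_self _) (by positivity)
  obtain ⟨K9, hK9⟩ : ∃ c : ℝ, ∀ x x' q q' : Fin d → ℝ,
      ‖ε⁻¹ • ((jacMat r x)ᵀ *ᵥ q) - ε⁻¹ • ((jacMat r x')ᵀ *ᵥ q')‖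
        ≤ |c| * (‖x - x'‖ * ‖q‖) + |K4| * ‖q - q'‖ := by
    refine ⟨|ε⁻¹| * ((d:ℝ) * d * |Mr2'|), fun x x' q q' => ?_⟩
    have he : ε⁻¹ • ((jacMat r x)ᵀ *ᵥ q) - ε⁻¹ • ((jacMat r x')ᵀ *ᵥ q')
        = ε⁻¹ • (((jacMat r x)ᵀ - (jacMat r x')ᵀ) *ᵥ q)
          + ε⁻¹ • ((jacMat r x')ᵀ *ᵥ (q - q')) := by
      rw [← smul_add, ← smul_sub]
      congr 1
      rw [Matrix.sub_mulVec, Matrix.mulVec_sub]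
      abel
    rw [he]
    refine (norm_add_le _ _).trans (add_le_add ?_ (hK4 x' (q - q')))
    have hent : ∀ i j, |((jacMat r x)ᵀ - (jacMat r x')ᵀ) i j| ≤ |Mr2'| * ‖x - x'‖ :=
      fun i j => by simpa [Matrix.transpose_apply, Matrix.sub_apply] using hjrd x x' j i
    rw [norm_smul, Real.norm_eq_abs]
    calc |ε⁻¹| * ‖((jacMat r x)ᵀ - (jacMat r x')ᵀ) *ᵥ q‖
        ≤ |ε⁻¹| * (((d:ℝ) * d * (|Mr2'| * ‖x - x'‖)) * ‖q‖) :=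
          mul_le_mul_of_nonneg_left (norm_mulVec_le' _ hent _) (abs_nonneg _)
      _ = (|ε⁻¹| * ((d:ℝ) * d * |Mr2'|)) * (‖x - x'‖ * ‖q‖) := by ring
      _ ≤ abs (|ε⁻¹| * ((d:ℝ) * d * |Mr2'|)) * (‖x - x'‖ * ‖q‖) :=
          mul_le_mul_of_nonneg_right (le_abs_self _) (by positivity)
  -- exact solution bounds on [0,1]
  have hyd : ∀ t ∈ Set.Icc (0:ℝ) 1, ‖y t - y 0‖ ≤ (|K1| + |K2|) * t :=
    norm_sub_self_le hy (fun t _ => (norm_add_le _ _).trans (add_le_add (hK1 _) (hK2 _)))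
  have hptc : Continuous pt := continuous_iff_continuousAt.mpr fun t => (hpt t).continuousAt
  have hpc : Continuous p := continuous_iff_continuousAt.mpr fun t => (hp t).continuousAt
  obtain ⟨Bpt', hBpt'⟩ :=
    (isCompact_Icc (a := (0:ℝ)) (b := 1)).exists_bound_of_continuousOn hptc.continuousOn
  obtain ⟨Bp', hBp'⟩ :=
    (isCompact_Icc (a := (0:ℝ)) (b := 1)).exists_bound_of_continuousOn hpc.continuousOn
  have hBpt : ∀ t ∈ Set.Icc (0:ℝ) 1, ‖pt t‖ ≤ |Bpt'| :=
    fun t ht => (hBpt' t ht).trans (le_abs_self _)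
  have hBp : ∀ t ∈ Set.Icc (0:ℝ) 1, ‖p t‖ ≤ |Bp'| :=
    fun t ht => (hBp' t ht).trans (le_abs_self _)
  have hMP : ∀ t ∈ Set.Icc (0:ℝ) 1,
      ‖-(((jacMat g (y t))ᵀ * Dbar) *ᵥ pt t) - ε⁻¹ • ((jacMat r (y t))ᵀ *ᵥ p t)‖
        ≤ |K3| * |Bpt'| + |K4| * |Bp'| := by
    intro t ht
    refine (norm_sub_le _ _).trans ?_
    rw [norm_neg]
    exact add_le_add
      ((hK3 _ _).trans (mul_le_mul_of_nonneg_left (hBpt t ht) (abs_nonneg _)))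
      ((hK4 _ _).trans (mul_le_mul_of_nonneg_left (hBp t ht) (abs_nonneg _)))
  have hptdev : ∀ t ∈ Set.Icc (0:ℝ) 1, ‖pt t - pt 0‖ ≤ (|K3| * |Bpt'| + |K4| * |Bp'|) * t :=
    norm_sub_self_le hpt hMP
  have hpdev : ∀ t ∈ Set.Icc (0:ℝ) 1, ‖p t - p 0‖ ≤ (|K3| * |Bpt'| + |K4| * |Bp'|) * t :=
    norm_sub_self_le hp hMP
  -- Lipschitz-in-time bound for the adjoint right-hand side
  have hPhiL : ∀ t ∈ Set.Icc (0:ℝ) 1,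
      ‖(-(((jacMat g (y t))ᵀ * Dbar) *ᵥ pt t) - ε⁻¹ • ((jacMat r (y t))ᵀ *ᵥ p t))
        - (-(((jacMat g (y 0))ᵀ * Dbar) *ᵥ pt 0) - ε⁻¹ • ((jacMat r (y 0))ᵀ *ᵥ p 0))‖
      ≤ ((|K7| * ((|K1| + |K2|) * |Bpt'|) + |K3| * (|K3| * |Bpt'| + |K4| * |Bp'|))
        + (|K9| * ((|K1| + |K2|) * |Bp'|) + |K4| * (|K3| * |Bpt'| + |K4| * |Bp'|))) * t := by
    intro t ht
    have ht0 : 0 ≤ t := ht.1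
    have he : (-(((jacMat g (y t))ᵀ * Dbar) *ᵥ pt t) - ε⁻¹ • ((jacMat r (y t))ᵀ *ᵥ p t))
        - (-(((jacMat g (y 0))ᵀ * Dbar) *ᵥ pt 0) - ε⁻¹ • ((jacMat r (y 0))ᵀ *ᵥ p 0))
        = -((((jacMat g (y t))ᵀ * Dbar) *ᵥ pt t) - (((jacMat g (y 0))ᵀ * Dbar) *ᵥ pt 0))
          - ((ε⁻¹ • ((jacMat r (y t))ᵀ *ᵥ p t)) - (ε⁻¹ • ((jacMat r (y 0))ᵀ *ᵥ p 0))) := by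
      abel
    rw [he]
    refine (norm_sub_le _ _).trans ?_
    rw [norm_neg]
    have h1 : ‖(((jacMat g (y t))ᵀ * Dbar) *ᵥ pt t) - (((jacMat g (y 0))ᵀ * Dbar) *ᵥ pt 0)‖
        ≤ |K7| * (((|K1| + |K2|) * t) * |Bpt'|)
          + |K3| * ((|K3| * |Bpt'| + |K4| * |Bp'|) * t) := by
      refine (hK7 (y t) (y 0) (pt t) (pt 0)).trans (add_le_add ?_ ?_)
      · exact mul_le_mul_of_nonneg_left
          (mul_le_mul (hyd t ht) (hBpt t ht) (norm_nonneg _)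
            (mul_nonneg (by positivity) ht0)) (abs_nonneg _)
      · exact mul_le_mul_of_nonneg_left (hptdev t ht) (abs_nonneg _)
    have h2 : ‖(ε⁻¹ • ((jacMat r (y t))ᵀ *ᵥ p t)) - (ε⁻¹ • ((jacMat r (y 0))ᵀ *ᵥ p 0))‖
        ≤ |K9| * (((|K1| + |K2|) * t) * |Bp'|)
          + |K4| * ((|K3| * |Bpt'| + |K4| * |Bp'|) * t) := by
      refine (hK9 (y t) (y 0) (p t) (p 0)).trans (add_le_add ?_ ?_)
      · exact mul_le_mul_of_nonneg_left
          (mul_le_mul (hyd t ht) (hBp t ht) (norm_nonneg _)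
            (mul_nonneg (by positivity) ht0)) (abs_nonneg _)
      · exact mul_le_mul_of_nonneg_left (hpdev t ht) (abs_nonneg _)
    refine (add_le_add h1 h2).trans (le_of_eq ?_)
    ring
  -- Taylor estimates for the exact flow
  have hTy : ∀ h : ℝ, 0 < h → h ≤ 1 →
      ‖y h - y 0 - h • (D *ᵥ g (y 0) + ε⁻¹ • r (y 0))‖
        ≤ ((|K5| + |K6|) * (|K1| + |K2|)) * h * h := by
    intro h hh hh1
    have hb : ∀ t ∈ Set.Icc (0:ℝ) h,
        ‖(D *ᵥ g (y t) + ε⁻¹ • r (y t)) - (D *ᵥ g (y 0) + ε⁻¹ • r (y 0))‖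
          ≤ (|K5| + |K6|) * ((|K1| + |K2|) * h) := by
      intro t ht
      have ht1 : t ∈ Set.Icc (0:ℝ) 1 := ⟨ht.1, ht.2.trans hh1⟩
      have he : (D *ᵥ g (y t) + ε⁻¹ • r (y t)) - (D *ᵥ g (y 0) + ε⁻¹ • r (y 0))
          = D *ᵥ (g (y t) - g (y 0)) + ε⁻¹ • (r (y t) - r (y 0)) := by
        rw [Matrix.mulVec_sub, smul_sub]
        abel
      rw [he]
      have hy1 : ‖y t - y 0‖ ≤ (|K1| + |K2|) * h :=
        (hyd t ht1).trans (mul_le_mul_of_nonneg_left ht.2 (by positivity))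
      refine (norm_add_le _ _).trans (le_of_le_of_eq (add_le_add
        ((hK5 _ _).trans (mul_le_mul_of_nonneg_left hy1 (abs_nonneg _)))
        ((hK6 _ _).trans (mul_le_mul_of_nonneg_left hy1 (abs_nonneg _)))) ?_)
      ring
    have := taylor_one (f' := fun t => D *ᵥ g (y t) + ε⁻¹ • r (y t)) hy hh.le hb
    exact le_of_le_of_eq this (by ring)
  have hTpt : ∀ h : ℝ, 0 < h → h ≤ 1 →
      ‖pt h - pt 0 - h • (-(((jacMat g (y 0))ᵀ * Dbar) *ᵥ pt 0)
          - ε⁻¹ • ((jacMat r (y 0))ᵀ *ᵥ p 0))‖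
        ≤ ((|K7| * ((|K1| + |K2|) * |Bpt'|) + |K3| * (|K3| * |Bpt'| + |K4| * |Bp'|))
          + (|K9| * ((|K1| + |K2|) * |Bp'|) + |K4| * (|K3| * |Bpt'| + |K4| * |Bp'|))) * h * h := by
    intro h hh hh1
    have hb : ∀ t ∈ Set.Icc (0:ℝ) h,
        ‖(-(((jacMat g (y t))ᵀ * Dbar) *ᵥ pt t) - ε⁻¹ • ((jacMat r (y t))ᵀ *ᵥ p t))
          - (-(((jacMat g (y 0))ᵀ * Dbar) *ᵥ pt 0) - ε⁻¹ • ((jacMat r (y 0))ᵀ *ᵥ p 0))‖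
          ≤ ((|K7| * ((|K1| + |K2|) * |Bpt'|) + |K3| * (|K3| * |Bpt'| + |K4| * |Bp'|))
            + (|K9| * ((|K1| + |K2|) * |Bp'|) + |K4| * (|K3| * |Bpt'| + |K4| * |Bp'|))) * h := by
      intro t ht
      have ht1 : t ∈ Set.Icc (0:ℝ) 1 := ⟨ht.1, ht.2.trans hh1⟩
      exact (hPhiL t ht1).trans (mul_le_mul_of_nonneg_left ht.2 (by positivity))
    have := taylor_one
      (f' := fun t => -(((jacMat g (y t))ᵀ * Dbar) *ᵥ pt t) - ε⁻¹ • ((jacMat r (y t))ᵀ *ᵥ p t))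
      hpt hh.le hb
    exact this
  have hTp : ∀ h : ℝ, 0 < h → h ≤ 1 →
      ‖p h - p 0 - h • (-(((jacMat g (y 0))ᵀ * Dbar) *ᵥ pt 0)
          - ε⁻¹ • ((jacMat r (y 0))ᵀ *ᵥ p 0))‖
        ≤ ((|K7| * ((|K1| + |K2|) * |Bpt'|) + |K3| * (|K3| * |Bpt'| + |K4| * |Bp'|))
          + (|K9| * ((|K1| + |K2|) * |Bp'|) + |K4| * (|K3| * |Bpt'| + |K4| * |Bp'|))) * h * h := by
    intro h hh hh1
    have hb : ∀ t ∈ Set.Icc (0:ℝ) h,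
        ‖(-(((jacMat g (y t))ᵀ * Dbar) *ᵥ pt t) - ε⁻¹ • ((jacMat r (y t))ᵀ *ᵥ p t))
          - (-(((jacMat g (y 0))ᵀ * Dbar) *ᵥ pt 0) - ε⁻¹ • ((jacMat r (y 0))ᵀ *ᵥ p 0))‖
          ≤ ((|K7| * ((|K1| + |K2|) * |Bpt'|) + |K3| * (|K3| * |Bpt'| + |K4| * |Bp'|))
            + (|K9| * ((|K1| + |K2|) * |Bp'|) + |K4| * (|K3| * |Bpt'| + |K4| * |Bp'|))) * h := by
      intro t ht
      have ht1 : t ∈ Set.Icc (0:ℝ) 1 := ⟨ht.1, ht.2.trans hh1⟩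
      exact (hPhiL t ht1).trans (mul_le_mul_of_nonneg_left ht.2 (by positivity))
    have := taylor_one
      (f' := fun t => -(((jacMat g (y t))ᵀ * Dbar) *ᵥ pt t) - ε⁻¹ • ((jacMat r (y t))ᵀ *ᵥ p t))
      hp hh.le hb
    exact this
  refine ⟨1 + (((∑ k, |tw k|) * (|K5| * ((∑ k, ∑ j, |ta k j|) * |K1| + (∑ k, ∑ j, |a k j|) * |K2|)) + (∑ k, |w k|) * (|K6| * ((∑ k, ∑ j, |ta k j|) * |K1| + (∑ k, ∑ j, |a k j|) * |K2|)) + (|K5| + |K6|) * (|K1| + |K2|)) + ((∑ k, |tw k|) * (|K7| * (((∑ k, ∑ j, |ta k j|) * |K1| + (∑ k, ∑ j, |a k j|) * |K2|) * (‖p 0‖ + 1)) + |K3| * ((∑ k, ∑ j, |tα k j|) * (|K3| * (‖p 0‖ + 1)) + (∑ k, ∑ j, |α k j|) * (|K4| * (‖p 0‖ + 1)))) + (∑ k, |w k|) * (|K9| * (((∑ k, ∑ j, |ta k j|) * |K1| + (∑ k, ∑ j, |a k j|) * |K2|) * (‖p 0‖ + 1)) + |K4| * ((∑ k, ∑ j,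 |tβ k j|) * (|K3| * (‖p 0‖ + 1)) + (∑ k, ∑ j, |β k j|) * (|K4| * (‖p 0‖ + 1)))) + ((|K7| * ((|K1| + |K2|) * |Bpt'|) + |K3| * (|K3| * |Bpt'| + |K4| * |Bp'|)) + (|K9| * ((|K1| + |K2|) * |Bp'|) + |K4| * (|K3| * |Bpt'| + |K4| * |Bp'|)))) + ((∑ k, |tw k|) * (|K7| * (((∑ k, ∑ j, |ta k j|) * |K1| + (∑ k, ∑ j, |a k j|) * |K2|) * (‖p 0‖ + 1)) + |K3| * ((∑ k, ∑ j, |tα k j|) * (|K3| * (‖p 0‖ + 1)) + (∑ k, ∑ j, |α k j|) * (|K4| * (‖p 0‖ + 1)))) + (∑ k, |w k|) * (|K9| * (((∑ k, ∑ j, |ta k j|) * |K1| + (∑ k, ∑ j, |a k j|) * |K2|) * (‖p 0‖ + 1)) + |K4| * ((∑ k, ∑ j, |tβ k j|) * (|K3| * (‖p 0‖ + 1)) + (∑ k, ∑ j, |β k j|) * (|K4| * (‖p 0‖ + 1)))) + ((|K7| * ((|K1| + |K2|) * |Bpt'|) + |K3| * (|K3| * |Bpt'| + |K4| * |Bp'|))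 + (|K9| * ((|K1| + |K2|) * |Bp'|) + |K4| * (|K3| * |Bpt'| + |K4| * |Bp'|))))), by positivity, 1, one_pos, ?_⟩
  intro h hh hh1 Y tP P eY etP eP hcl
  have hh0 : (0:ℝ) ≤ h := hh.le
  have htPb : ∀ j, ‖tP j‖ ≤ ‖p 0‖ + 1 := fun j => by
    linarith [norm_sub_norm_le (tP j) (p 0), (hcl j).2.1]
  have hPb : ∀ j, ‖P j‖ ≤ ‖p 0‖ + 1 := fun j => by
    linarith [norm_sub_norm_le (P j) (p 0), (hcl j).2.2]
  -- stage deviations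
  have hYd : ∀ i, ‖Y i - y 0‖ ≤ ((∑ k, ∑ j, |ta k j|) * |K1| + (∑ k, ∑ j, |a k j|) * |K2|) * h := by
    intro i
    have he : Y i - y 0 = h • (∑ j ∈ univ.filter (fun j => j < i), ta i j • (D *ᵥ g (Y j)))
        + h • (∑ j ∈ univ.filter (fun j => j ≤ i), a i j • (ε⁻¹ • r (Y j))) := by
      rw [eY i]; abel
    rw [he]
    have b1 := helper_sum ta i (fun j => D *ᵥ g (Y j)) (fun j => hK1 (Y j))
      (univ.filter (fun j => j < i))
    have b2 := helper_sum a i (fun j => ε⁻¹ • r (Y j)) (fun j => hK2 (Y j))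
      (univ.filter (fun j => j ≤ i))
    refine (norm_add_le _ _).trans ?_
    rw [norm_smul, norm_smul, Real.norm_eq_abs, abs_of_pos hh]
    exact le_of_le_of_eq (add_le_add (mul_le_mul_of_nonneg_left b1 hh0)
      (mul_le_mul_of_nonneg_left b2 hh0)) (by ring)
  have htPd : ∀ i, ‖tP i - p 0‖ ≤ ((∑ k, ∑ j, |tα k j|) * (|K3| * (‖p 0‖ + 1)) + (∑ k, ∑ j, |α k j|) * (|K4| * (‖p 0‖ + 1))) * h := by
    intro i
    have he : tP i - p 0
        = -(h • (∑ j, tα i j • (((jacMat g (Y j))ᵀ * Dbar) *ᵥ tP j)))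
          - h • (∑ j, α i j • (ε⁻¹ • ((jacMat r (Y j))ᵀ *ᵥ P j))) := by
      rw [etP i]; abel
    rw [he]
    have b1 := helper_sum tα i (fun j => ((jacMat g (Y j))ᵀ * Dbar) *ᵥ tP j)
      (fun j => (hK3 (Y j) (tP j)).trans
        (mul_le_mul_of_nonneg_left (htPb j) (abs_nonneg _))) univ
    have b2 := helper_sum α i (fun j => ε⁻¹ • ((jacMat r (Y j))ᵀ *ᵥ P j))
      (fun j => (hK4 (Y j) (P j)).trans
        (mul_le_mul_of_nonneg_left (hPb j) (abs_nonneg _))) univ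
    refine (norm_sub_le _ _).trans ?_
    rw [norm_neg, norm_smul, norm_smul, Real.norm_eq_abs, abs_of_pos hh]
    exact le_of_le_of_eq (add_le_add (mul_le_mul_of_nonneg_left b1 hh0)
      (mul_le_mul_of_nonneg_left b2 hh0)) (by ring)
  have hPd : ∀ i, ‖P i - p 0‖ ≤ ((∑ k, ∑ j, |tβ k j|) * (|K3| * (‖p 0‖ + 1)) + (∑ k, ∑ j, |β k j|) * (|K4| * (‖p 0‖ + 1))) * h := by
    intro i
    have he : P i - p 0
        = -(h • (∑ j, tβ i j • (((jacMat g (Y j))ᵀ * Dbar) *ᵥ tP j)))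
          - h • (∑ j, β i j • (ε⁻¹ • ((jacMat r (Y j))ᵀ *ᵥ P j))) := by
      rw [eP i]; abel
    rw [he]
    have b1 := helper_sum tβ i (fun j => ((jacMat g (Y j))ᵀ * Dbar) *ᵥ tP j)
      (fun j => (hK3 (Y j) (tP j)).trans
        (mul_le_mul_of_nonneg_left (htPb j) (abs_nonneg _))) univ
    have b2 := helper_sum β i (fun j => ε⁻¹ • ((jacMat r (Y j))ᵀ *ᵥ P j))
      (fun j => (hK4 (Y j) (P j)).trans
        (mul_le_mul_of_nonneg_left (hPb j) (abs_nonneg _))) univ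
    refine (norm_sub_le _ _).trans ?_
    rw [norm_neg, norm_smul, norm_smul, Real.norm_eq_abs, abs_of_pos hh]
    exact le_of_le_of_eq (add_le_add (mul_le_mul_of_nonneg_left b1 hh0)
      (mul_le_mul_of_nonneg_left b2 hh0)) (by ring)
  -- elementwise consistency bounds
  have hel1 : ∀ i, ‖D *ᵥ g (Y i) - D *ᵥ g (y 0)‖ ≤ |K5| * (((∑ k, ∑ j, |ta k j|) * |K1| + (∑ k, ∑ j, |a k j|) * |K2|) * h) := by
    intro i
    rw [← Matrix.mulVec_sub]
    exact (hK5 _ _).trans (mul_le_mul_of_nonneg_left (hYd i) (abs_nonneg _))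
  have hel2 : ∀ i, ‖ε⁻¹ • r (Y i) - ε⁻¹ • r (y 0)‖ ≤ |K6| * (((∑ k, ∑ j, |ta k j|) * |K1| + (∑ k, ∑ j, |a k j|) * |K2|) * h) := by
    intro i
    rw [← smul_sub]
    exact (hK6 _ _).trans (mul_le_mul_of_nonneg_left (hYd i) (abs_nonneg _))
  have hEg : ∀ i, ‖(((jacMat g (Y i))ᵀ * Dbar) *ᵥ tP i) - (((jacMat g (y 0))ᵀ * Dbar) *ᵥ p 0)‖
      ≤ (|K7| * (((∑ k, ∑ j, |ta k j|) * |K1| + (∑ k, ∑ j, |a k j|) * |K2|) * (‖p 0‖ + 1)) + |K3| * ((∑ k, ∑ j, |tα k j|) * (|K3| * (‖p 0‖ + 1)) + (∑ k, ∑ j, |α k j|) * (|K4| * (‖p 0‖ + 1)))) * h := by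
    intro i
    have e1 : |K7| * ((((∑ k, ∑ j, |ta k j|) * |K1| + (∑ k, ∑ j, |a k j|) * |K2|) * h) * (‖p 0‖ + 1)) + |K3| * (((∑ k, ∑ j, |tα k j|) * (|K3| * (‖p 0‖ + 1)) + (∑ k, ∑ j, |α k j|) * (|K4| * (‖p 0‖ + 1))) * h) = (|K7| * (((∑ k, ∑ j, |ta k j|) * |K1| + (∑ k, ∑ j, |a k j|) * |K2|) * (‖p 0‖ + 1)) + |K3| * ((∑ k, ∑ j, |tα k j|) * (|K3| * (‖p 0‖ + 1)) + (∑ k, ∑ j, |α k j|) * (|K4| * (‖p 0‖ + 1)))) * h := by ring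
    refine (hK7 (Y i) (y 0) (tP i) (p 0)).trans (le_of_le_of_eq (add_le_add ?_ ?_) e1)
    · exact mul_le_mul_of_nonneg_left
        (mul_le_mul (hYd i) (htPb i) (norm_nonneg _) (mul_nonneg (by positivity) hh0))
        (abs_nonneg _)
    · exact mul_le_mul_of_nonneg_left (htPd i) (abs_nonneg _)
  have hEr : ∀ i, ‖(ε⁻¹ • ((jacMat r (Y i))ᵀ *ᵥ P i)) - (ε⁻¹ • ((jacMat r (y 0))ᵀ *ᵥ p 0))‖
      ≤ (|K9| * (((∑ k, ∑ j, |ta k j|) * |K1| + (∑ k, ∑ j, |a k j|) * |K2|) * (‖p 0‖ + 1)) + |K4| * ((∑ k, ∑ j, |tβ k j|) * (|K3| * (‖p 0‖ + 1)) + (∑ k, ∑ j, |β k j|) * (|K4| * (‖p 0‖ + 1)))) * h := by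
    intro i
    have e1 : |K9| * ((((∑ k, ∑ j, |ta k j|) * |K1| + (∑ k, ∑ j, |a k j|) * |K2|) * h) * (‖p 0‖ + 1)) + |K4| * (((∑ k, ∑ j, |tβ k j|) * (|K3| * (‖p 0‖ + 1)) + (∑ k, ∑ j, |β k j|) * (|K4| * (‖p 0‖ + 1))) * h) = (|K9| * (((∑ k, ∑ j, |ta k j|) * |K1| + (∑ k, ∑ j, |a k j|) * |K2|) * (‖p 0‖ + 1)) + |K4| * ((∑ k, ∑ j, |tβ k j|) * (|K3| * (‖p 0‖ + 1)) + (∑ k, ∑ j, |β k j|) * (|K4| * (‖p 0‖ + 1)))) * h := by ring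
    refine (hK9 (Y i) (y 0) (P i) (p 0)).trans (le_of_le_of_eq (add_le_add ?_ ?_) e1)
    · exact mul_le_mul_of_nonneg_left
        (mul_le_mul (hYd i) (hPb i) (norm_nonneg _) (mul_nonneg (by positivity) hh0))
        (abs_nonneg _)
    · exact mul_le_mul_of_nonneg_left (hPd i) (abs_nonneg _)
  -- order-one reproduction identities
  have ey1 : ∑ i, tw i • (D *ᵥ g (Y i)) - D *ᵥ g (y 0)
      = ∑ i, tw i • (D *ᵥ g (Y i) - D *ᵥ g (y 0)) := by
    simp only [smul_sub, Finset.sum_sub_distrib, ← Finset.sum_smul, hord1, one_smul]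
  have ey2 : ∑ i, w i • (ε⁻¹ • r (Y i)) - ε⁻¹ • r (y 0)
      = ∑ i, w i • (ε⁻¹ • r (Y i) - ε⁻¹ • r (y 0)) := by
    simp only [smul_sub, Finset.sum_sub_distrib, ← Finset.sum_smul, hord1', one_smul]
  have eA : ∑ i, tw i • (((jacMat g (Y i))ᵀ * Dbar) *ᵥ tP i) - ((jacMat g (y 0))ᵀ * Dbar) *ᵥ p 0
      = ∑ i, tw i • ((((jacMat g (Y i))ᵀ * Dbar) *ᵥ tP i) - ((jacMat g (y 0))ᵀ * Dbar) *ᵥ p 0) := by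
    simp only [smul_sub, Finset.sum_sub_distrib, ← Finset.sum_smul, hord1, one_smul]
  have eB : ∑ i, w i • (ε⁻¹ • ((jacMat r (Y i))ᵀ *ᵥ P i)) - ε⁻¹ • ((jacMat r (y 0))ᵀ *ᵥ p 0)
      = ∑ i, w i • ((ε⁻¹ • ((jacMat r (Y i))ᵀ *ᵥ P i)) - ε⁻¹ • ((jacMat r (y 0))ᵀ *ᵥ p 0)) := by
    simp only [smul_sub, Finset.sum_sub_distrib, ← Finset.sum_smul, hord1', one_smul]
  -- the three local error terms
  have hT1 : ‖(y 0 + h • ∑ i, tw i • (D *ᵥ g (Y i)) + h • ∑ i, w i • (ε⁻¹ • r (Y i))) - y h‖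
      ≤ ((∑ k, |tw k|) * (|K5| * ((∑ k, ∑ j, |ta k j|) * |K1| + (∑ k, ∑ j, |a k j|) * |K2|)) + (∑ k, |w k|) * (|K6| * ((∑ k, ∑ j, |ta k j|) * |K1| + (∑ k, ∑ j, |a k j|) * |K2|)) + (|K5| + |K6|) * (|K1| + |K2|)) * h * h := by
    have hsplit : (y 0 + h • ∑ i, tw i • (D *ᵥ g (Y i)) + h • ∑ i, w i • (ε⁻¹ • r (Y i))) - y h
        = (h • (∑ i, tw i • (D *ᵥ g (Y i) - D *ᵥ g (y 0)))
            + h • (∑ i, w i • (ε⁻¹ • r (Y i) - ε⁻¹ • r (y 0))))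
          + -(y h - y 0 - h • (D *ᵥ g (y 0) + ε⁻¹ • r (y 0))) := by
      rw [← ey1, ← ey2]
      simp only [smul_sub, smul_add]
      abel
    have c1 : ‖h • (∑ i, tw i • (D *ᵥ g (Y i) - D *ᵥ g (y 0)))‖
        ≤ h * ((∑ k, |tw k|) * (|K5| * (((∑ k, ∑ j, |ta k j|) * |K1| + (∑ k, ∑ j, |a k j|) * |K2|) * h))) := by
      rw [norm_smul, Real.norm_eq_abs, abs_of_pos hh]
      exact mul_le_mul_of_nonneg_left (helper_sum1 tw _ hel1) hh0
    have c2 : ‖h • (∑ i, w i • (ε⁻¹ • r (Y i) - ε⁻¹ • r (y 0)))‖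
        ≤ h * ((∑ k, |w k|) * (|K6| * (((∑ k, ∑ j, |ta k j|) * |K1| + (∑ k, ∑ j, |a k j|) * |K2|) * h))) := by
      rw [norm_smul, Real.norm_eq_abs, abs_of_pos hh]
      exact mul_le_mul_of_nonneg_left (helper_sum1 w _ hel2) hh0
    rw [hsplit]
    refine (norm_add_le _ _).trans ?_
    rw [norm_neg]
    have e1 : h * ((∑ k, |tw k|) * (|K5| * (((∑ k, ∑ j, |ta k j|) * |K1| + (∑ k, ∑ j, |a k j|) * |K2|) * h))) + h * ((∑ k, |w k|) * (|K6| * (((∑ k, ∑ j, |ta k j|) * |K1| + (∑ k, ∑ j, |a k j|) * |K2|) * h)))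
        + ((|K5| + |K6|) * (|K1| + |K2|)) * h * h = ((∑ k, |tw k|) * (|K5| * ((∑ k, ∑ j, |ta k j|) * |K1| + (∑ k, ∑ j, |a k j|) * |K2|)) + (∑ k, |w k|) * (|K6| * ((∑ k, ∑ j, |ta k j|) * |K1| + (∑ k, ∑ j, |a k j|) * |K2|)) + (|K5| + |K6|) * (|K1| + |K2|)) * h * h := by ring
    exact le_of_le_of_eq (add_le_add ((norm_add_le _ _).trans (add_le_add c1 c2))
      (hTy h hh hh1)) e1
  have hT2 : ‖(pt 0 - h • ∑ i, tw i • (((jacMat g (Y i))ᵀ * Dbar) *ᵥ tP i)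
        - h • ∑ i, w i • (ε⁻¹ • ((jacMat r (Y i))ᵀ *ᵥ P i))) - pt h‖
      ≤ ((∑ k, |tw k|) * (|K7| * (((∑ k, ∑ j, |ta k j|) * |K1| + (∑ k, ∑ j, |a k j|) * |K2|) * (‖p 0‖ + 1)) + |K3| * ((∑ k, ∑ j, |tα k j|) * (|K3| * (‖p 0‖ + 1)) + (∑ k, ∑ j, |α k j|) * (|K4| * (‖p 0‖ + 1)))) + (∑ k, |w k|) * (|K9| * (((∑ k, ∑ j, |ta k j|) * |K1| + (∑ k, ∑ j, |a k j|) * |K2|) * (‖p 0‖ + 1)) + |K4| * ((∑ k, ∑ j, |tβ k j|) * (|K3| * (‖p 0‖ + 1)) + (∑ k, ∑ j, |β k j|) * (|K4| * (‖p 0‖ + 1)))) + ((|K7| * ((|K1| + |K2|) * |Bpt'|) + |K3| * (|K3| * |Bpt'| + |K4| * |Bp'|)) + (|K9| * ((|K1| + |K2|) * |Bp'|) + |K4| * (|K3| * |Bpt'| + |K4| * |Bp'|)))) * h * h := by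
    have hsplit : (pt 0 - h • ∑ i, tw i • (((jacMat g (Y i))ᵀ * Dbar) *ᵥ tP i)
          - h • ∑ i, w i • (ε⁻¹ • ((jacMat r (Y i))ᵀ *ᵥ P i))) - pt h
        = (-(h • (∑ i, tw i • ((((jacMat g (Y i))ᵀ * Dbar) *ᵥ tP i)
              - ((jacMat g (y 0))ᵀ * Dbar) *ᵥ p 0)))
            - h • (∑ i, w i • ((ε⁻¹ • ((jacMat r (Y i))ᵀ *ᵥ P i))
              - ε⁻¹ • ((jacMat r (y 0))ᵀ *ᵥ p 0))))
          + -(pt h - pt 0 - h • (-(((jacMat g (y 0))ᵀ * Dbar) *ᵥ pt 0)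
              - ε⁻¹ • ((jacMat r (y 0))ᵀ *ᵥ p 0))) := by
      rw [h0eq, ← eA, ← eB]
      simp only [smul_sub, smul_add, smul_neg]
      abel
    have c1 : ‖h • (∑ i, tw i • ((((jacMat g (Y i))ᵀ * Dbar) *ᵥ tP i)
          - ((jacMat g (y 0))ᵀ * Dbar) *ᵥ p 0))‖
        ≤ h * ((∑ k, |tw k|) * ((|K7| * (((∑ k, ∑ j, |ta k j|) * |K1| + (∑ k, ∑ j, |a k j|) * |K2|) * (‖p 0‖ + 1)) + |K3| * ((∑ k, ∑ j, |tα k j|) * (|K3| * (‖p 0‖ + 1)) + (∑ k, ∑ j, |α k j|) * (|K4| * (‖p 0‖ + 1)))) * h)) := by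
      rw [norm_smul, Real.norm_eq_abs, abs_of_pos hh]
      exact mul_le_mul_of_nonneg_left (helper_sum1 tw _ hEg) hh0
    have c2 : ‖h • (∑ i, w i • ((ε⁻¹ • ((jacMat r (Y i))ᵀ *ᵥ P i))
          - ε⁻¹ • ((jacMat r (y 0))ᵀ *ᵥ p 0)))‖
        ≤ h * ((∑ k, |w k|) * ((|K9| * (((∑ k, ∑ j, |ta k j|) * |K1| + (∑ k, ∑ j, |a k j|) * |K2|) * (‖p 0‖ + 1)) + |K4| * ((∑ k, ∑ j, |tβ k j|) * (|K3| * (‖p 0‖ + 1)) + (∑ k, ∑ j, |β k j|) * (|K4| * (‖p 0‖ + 1)))) * h)) := by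
      rw [norm_smul, Real.norm_eq_abs, abs_of_pos hh]
      exact mul_le_mul_of_nonneg_left (helper_sum1 w _ hEr) hh0
    rw [hsplit]
    refine (norm_add_le _ _).trans ?_
    rw [norm_neg]
    have e1 : h * ((∑ k, |tw k|) * ((|K7| * (((∑ k, ∑ j, |ta k j|) * |K1| + (∑ k, ∑ j, |a k j|) * |K2|) * (‖p 0‖ + 1)) + |K3| * ((∑ k, ∑ j, |tα k j|) * (|K3| * (‖p 0‖ + 1)) + (∑ k, ∑ j, |α k j|) * (|K4| * (‖p 0‖ + 1)))) * h)) + h * ((∑ k, |w k|) * ((|K9| * (((∑ k, ∑ j, |ta k j|) * |K1| + (∑ k, ∑ j, |a k j|) * |K2|) * (‖p 0‖ + 1)) + |K4| * ((∑ k, ∑ j, |tβ k j|) * (|K3| * (‖p 0‖ + 1)) + (∑ k, ∑ j, |β k j|) * (|K4| * (‖p 0‖ + 1)))) * h))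
        + ((|K7| * ((|K1| + |K2|) * |Bpt'|) + |K3| * (|K3| * |Bpt'| + |K4| * |Bp'|)) + (|K9| * ((|K1| + |K2|) * |Bp'|) + |K4| * (|K3| * |Bpt'| + |K4| * |Bp'|))) * h * h = ((∑ k, |tw k|) * (|K7| * (((∑ k, ∑ j, |ta k j|) * |K1| + (∑ k, ∑ j, |a k j|) * |K2|) * (‖p 0‖ + 1)) + |K3| * ((∑ k, ∑ j, |tα k j|) * (|K3| * (‖p 0‖ + 1)) + (∑ k, ∑ j, |α k j|) * (|K4| * (‖p 0‖ + 1)))) + (∑ k, |w k|) * (|K9| * (((∑ k, ∑ j, |ta k j|) * |K1| + (∑ k, ∑ j, |a k j|) * |K2|) * (‖p 0‖ + 1)) + |K4| * ((∑ k, ∑ j, |tβ k j|) * (|K3| * (‖p 0‖ + 1)) + (∑ k, ∑ j, |β k j|) * (|K4| * (‖p 0‖ + 1)))) + ((|K7| * ((|K1| + |K2|) * |Bpt'|) + |K3| * (|K3| * |Bpt'| + |K4| * |Bp'|)) + (|K9| * ((|K1| + |K2|) * |Bp'|) + |K4| * (|K3| * |Bpt'| + |K4| * |Bp'|)))) * h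 * h := by ring
    refine le_of_le_of_eq (add_le_add ((norm_sub_le _ _).trans ?_) (hTpt h hh hh1)) e1
    rw [norm_neg]
    exact add_le_add c1 c2
  have hT3 : ‖(p 0 - h • ∑ i, tw i • (((jacMat g (Y i))ᵀ * Dbar) *ᵥ tP i)
        - h • ∑ i, w i • (ε⁻¹ • ((jacMat r (Y i))ᵀ *ᵥ P i))) - p h‖
      ≤ ((∑ k, |tw k|) * (|K7| * (((∑ k, ∑ j, |ta k j|) * |K1| + (∑ k, ∑ j, |a k j|) * |K2|) * (‖p 0‖ + 1)) + |K3| * ((∑ k, ∑ j, |tα k j|) * (|K3| * (‖p 0‖ + 1)) + (∑ k, ∑ j, |α k j|) * (|K4| * (‖p 0‖ + 1)))) + (∑ k, |w k|) * (|K9| * (((∑ k, ∑ j, |ta k j|) * |K1| + (∑ k, ∑ j, |a k j|) * |K2|) * (‖p 0‖ + 1)) + |K4| * ((∑ k, ∑ j, |tβ k j|) * (|K3| * (‖p 0‖ + 1)) + (∑ k, ∑ j, |β k j|) * (|K4| * (‖p 0‖ + 1)))) + ((|K7| * ((|K1| + |K2|) * |Bpt'|) + |K3| * (|K3| * |Bpt'|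 + |K4| * |Bp'|)) + (|K9| * ((|K1| + |K2|) * |Bp'|) + |K4| * (|K3| * |Bpt'| + |K4| * |Bp'|)))) * h * h := by
    have hsplit : (p 0 - h • ∑ i, tw i • (((jacMat g (Y i))ᵀ * Dbar) *ᵥ tP i)
          - h • ∑ i, w i • (ε⁻¹ • ((jacMat r (Y i))ᵀ *ᵥ P i))) - p h
        = (-(h • (∑ i, tw i • ((((jacMat g (Y i))ᵀ * Dbar) *ᵥ tP i)
              - ((jacMat g (y 0))ᵀ * Dbar) *ᵥ p 0)))
            - h • (∑ i, w i • ((ε⁻¹ • ((jacMat r (Y i))ᵀ *ᵥ P i))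
              - ε⁻¹ • ((jacMat r (y 0))ᵀ *ᵥ p 0))))
          + -(p h - p 0 - h • (-(((jacMat g (y 0))ᵀ * Dbar) *ᵥ pt 0)
              - ε⁻¹ • ((jacMat r (y 0))ᵀ *ᵥ p 0))) := by
      rw [h0eq, ← eA, ← eB]
      simp only [smul_sub, smul_add, smul_neg]
      abel
    have c1 : ‖h • (∑ i, tw i • ((((jacMat g (Y i))ᵀ * Dbar) *ᵥ tP i)
          - ((jacMat g (y 0))ᵀ * Dbar) *ᵥ p 0))‖
        ≤ h * ((∑ k, |tw k|) * ((|K7| * (((∑ k, ∑ j, |ta k j|) * |K1| + (∑ k, ∑ j, |a k j|) * |K2|) * (‖p 0‖ + 1)) + |K3| * ((∑ k, ∑ j, |tα k j|) * (|K3| * (‖p 0‖ + 1)) + (∑ k, ∑ j, |α k j|) * (|K4| * (‖p 0‖ + 1)))) * h)) := by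
      rw [norm_smul, Real.norm_eq_abs, abs_of_pos hh]
      exact mul_le_mul_of_nonneg_left (helper_sum1 tw _ hEg) hh0
    have c2 : ‖h • (∑ i, w i • ((ε⁻¹ • ((jacMat r (Y i))ᵀ *ᵥ P i))
          - ε⁻¹ • ((jacMat r (y 0))ᵀ *ᵥ p 0)))‖
        ≤ h * ((∑ k, |w k|) * ((|K9| * (((∑ k, ∑ j, |ta k j|) * |K1| + (∑ k, ∑ j, |a k j|) * |K2|) * (‖p 0‖ + 1)) + |K4| * ((∑ k, ∑ j, |tβ k j|) * (|K3| * (‖p 0‖ + 1)) + (∑ k, ∑ j, |β k j|) * (|K4| * (‖p 0‖ + 1)))) * h)) := by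
      rw [norm_smul, Real.norm_eq_abs, abs_of_pos hh]
      exact mul_le_mul_of_nonneg_left (helper_sum1 w _ hEr) hh0
    rw [hsplit]
    refine (norm_add_le _ _).trans ?_
    rw [norm_neg]
    have e1 : h * ((∑ k, |tw k|) * ((|K7| * (((∑ k, ∑ j, |ta k j|) * |K1| + (∑ k, ∑ j, |a k j|) * |K2|) * (‖p 0‖ + 1)) + |K3| * ((∑ k, ∑ j, |tα k j|) * (|K3| * (‖p 0‖ + 1)) + (∑ k, ∑ j, |α k j|) * (|K4| * (‖p 0‖ + 1)))) * h)) + h * ((∑ k, |w k|) * ((|K9| * (((∑ k, ∑ j, |ta k j|) * |K1| + (∑ k, ∑ j, |a k j|) * |K2|) * (‖p 0‖ + 1)) + |K4| * ((∑ k, ∑ j, |tβ k j|) * (|K3| * (‖p 0‖ + 1)) + (∑ k, ∑ j, |β k j|) * (|K4| * (‖p 0‖ + 1)))) * h))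
        + ((|K7| * ((|K1| + |K2|) * |Bpt'|) + |K3| * (|K3| * |Bpt'| + |K4| * |Bp'|)) + (|K9| * ((|K1| + |K2|) * |Bp'|) + |K4| * (|K3| * |Bpt'| + |K4| * |Bp'|))) * h * h = ((∑ k, |tw k|) * (|K7| * (((∑ k, ∑ j, |ta k j|) * |K1| + (∑ k, ∑ j, |a k j|) * |K2|) * (‖p 0‖ + 1)) + |K3| * ((∑ k, ∑ j, |tα k j|) * (|K3| * (‖p 0‖ + 1)) + (∑ k, ∑ j, |α k j|) * (|K4| * (‖p 0‖ + 1)))) + (∑ k, |w k|) * (|K9| * (((∑ k, ∑ j, |ta k j|) * |K1| + (∑ k, ∑ j, |a k j|) * |K2|) * (‖p 0‖ + 1)) + |K4| * ((∑ k, ∑ j, |tβ k j|) * (|K3| * (‖p 0‖ + 1)) + (∑ k, ∑ j, |β k j|) * (|K4| * (‖p 0‖ + 1)))) + ((|K7| * ((|K1| + |K2|) * |Bpt'|) + |K3| * (|K3| * |Bpt'| + |K4| * |Bp'|)) + (|K9| * ((|K1| + |K2|) * |Bp'|) + |K4| * (|K3| * |Bpt'| + |K4| * |Bp'|)))) * h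 * h := by ring
    refine le_of_le_of_eq (add_le_add ((norm_sub_le _ _).trans ?_) (hTp h hh hh1)) e1
    rw [norm_neg]
    exact add_le_add c1 c2
  calc ‖(y 0 + h • ∑ i, tw i • (D *ᵥ g (Y i)) + h • ∑ i, w i • (ε⁻¹ • r (Y i))) - y h‖
        + ‖(pt 0 - h • ∑ i, tw i • (((jacMat g (Y i))ᵀ * Dbar) *ᵥ tP i)
            - h • ∑ i, w i • (ε⁻¹ • ((jacMat r (Y i))ᵀ *ᵥ P i))) - pt h‖
        + ‖(p 0 - h • ∑ i, tw i • (((jacMat g (Y i))ᵀ * Dbar) *ᵥ tP i)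
            - h • ∑ i, w i • (ε⁻¹ • ((jacMat r (Y i))ᵀ *ᵥ P i))) - p h‖
      ≤ ((∑ k, |tw k|) * (|K5| * ((∑ k, ∑ j, |ta k j|) * |K1| + (∑ k, ∑ j, |a k j|) * |K2|)) + (∑ k, |w k|) * (|K6| * ((∑ k, ∑ j, |ta k j|) * |K1| + (∑ k, ∑ j, |a k j|) * |K2|)) + (|K5| + |K6|) * (|K1| + |K2|)) * h * h + ((∑ k, |tw k|) * (|K7| * (((∑ k, ∑ j, |ta k j|) * |K1| + (∑ k, ∑ j, |a k j|) * |K2|) * (‖p 0‖ + 1)) + |K3| * ((∑ k, ∑ j, |tα k j|) * (|K3| * (‖p 0‖ + 1)) + (∑ k, ∑ j, |α k j|) * (|K4| * (‖p 0‖ + 1)))) + (∑ k, |w k|) * (|K9| * (((∑ k, ∑ j, |ta k j|) * |K1| + (∑ k, ∑ j, |a k j|) * |K2|) * (‖p 0‖ + 1)) + |K4| * ((∑ k, ∑ j, |tβ k j|) * (|K3| * (‖p 0‖ + 1)) + (∑ k, ∑ j, |β k j|) * (|K4| * (‖p 0‖ + 1)))) + ((|K7| * ((|K1| + |K2|) *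 |Bpt'|) + |K3| * (|K3| * |Bpt'| + |K4| * |Bp'|)) + (|K9| * ((|K1| + |K2|) * |Bp'|) + |K4| * (|K3| * |Bpt'| + |K4| * |Bp'|)))) * h * h + ((∑ k, |tw k|) * (|K7| * (((∑ k, ∑ j, |ta k j|) * |K1| + (∑ k, ∑ j, |a k j|) * |K2|) * (‖p 0‖ + 1)) + |K3| * ((∑ k, ∑ j, |tα k j|) * (|K3| * (‖p 0‖ + 1)) + (∑ k, ∑ j, |α k j|) * (|K4| * (‖p 0‖ + 1)))) + (∑ k, |w k|) * (|K9| * (((∑ k, ∑ j, |ta k j|) * |K1| + (∑ k, ∑ j, |a k j|) * |K2|) * (‖p 0‖ + 1)) + |K4| * ((∑ k, ∑ j, |tβ k j|) * (|K3| * (‖p 0‖ + 1)) + (∑ k, ∑ j, |β k j|) * (|K4| * (‖p 0‖ + 1)))) + ((|K7| * ((|K1| + |K2|) * |Bpt'|) + |K3| * (|K3| * |Bpt'| + |K4| * |Bp'|)) + (|K9| * ((|K1| + |K2|) * |Bp'|) + |K4| * (|K3| * |Bpt'| + |K4| * |Bp'|)))) * h * h :=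
        add_le_add (add_le_add hT1 hT2) hT3
    _ = (((∑ k, |tw k|) * (|K5| * ((∑ k, ∑ j, |ta k j|) * |K1| + (∑ k, ∑ j, |a k j|) * |K2|)) + (∑ k, |w k|) * (|K6| * ((∑ k, ∑ j, |ta k j|) * |K1| + (∑ k, ∑ j, |a k j|) * |K2|)) + (|K5| + |K6|) * (|K1| + |K2|)) + ((∑ k, |tw k|) * (|K7| * (((∑ k, ∑ j, |ta k j|) * |K1| + (∑ k, ∑ j, |a k j|) * |K2|) * (‖p 0‖ + 1)) + |K3| * ((∑ k, ∑ j, |tα k j|) * (|K3| * (‖p 0‖ + 1)) + (∑ k, ∑ j, |α k j|) * (|K4| * (‖p 0‖ + 1)))) + (∑ k, |w k|) * (|K9| * (((∑ k, ∑ j, |ta k j|) * |K1| + (∑ k, ∑ j, |a k j|) * |K2|) * (‖p 0‖ + 1)) + |K4| * ((∑ k, ∑ j, |tβ k j|) * (|K3| * (‖p 0‖ + 1)) + (∑ k, ∑ j, |β k j|) * (|K4| * (‖p 0‖ + 1)))) + ((|K7| * ((|K1| + |K2|) * |Bpt'|) + |K3| * (|K3| * |Bpt'| + |K4| * |Bp'|))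 + (|K9| * ((|K1| + |K2|) * |Bp'|) + |K4| * (|K3| * |Bpt'| + |K4| * |Bp'|)))) + ((∑ k, |tw k|) * (|K7| * (((∑ k, ∑ j, |ta k j|) * |K1| + (∑ k, ∑ j, |a k j|) * |K2|) * (‖p 0‖ + 1)) + |K3| * ((∑ k, ∑ j, |tα k j|) * (|K3| * (‖p 0‖ + 1)) + (∑ k, ∑ j, |α k j|) * (|K4| * (‖p 0‖ + 1)))) + (∑ k, |w k|) * (|K9| * (((∑ k, ∑ j, |ta k j|) * |K1| + (∑ k, ∑ j, |a k j|) * |K2|) * (‖p 0‖ + 1)) + |K4| * ((∑ k, ∑ j, |tβ k j|) * (|K3| * (‖p 0‖ + 1)) + (∑ k, ∑ j, |β k j|) * (|K4| * (‖p 0‖ + 1)))) + ((|K7| * ((|K1| + |K2|) * |Bpt'|) + |K3| * (|K3| * |Bpt'| + |K4| * |Bp'|)) + (|K9| * ((|K1| + |K2|) * |Bp'|) + |K4| * (|K3| * |Bpt'| + |K4| * |Bp'|))))) * h ^ 2 := by ring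
    _ ≤ (1 + (((∑ k, |tw k|) * (|K5| * ((∑ k, ∑ j, |ta k j|) * |K1| + (∑ k, ∑ j, |a k j|) * |K2|)) + (∑ k, |w k|) * (|K6| * ((∑ k, ∑ j, |ta k j|) * |K1| + (∑ k, ∑ j, |a k j|) * |K2|)) + (|K5| + |K6|) * (|K1| + |K2|)) + ((∑ k, |tw k|) * (|K7| * (((∑ k, ∑ j, |ta k j|) * |K1| + (∑ k, ∑ j, |a k j|) * |K2|) * (‖p 0‖ + 1)) + |K3| * ((∑ k, ∑ j, |tα k j|) * (|K3| * (‖p 0‖ + 1)) + (∑ k, ∑ j, |α k j|) * (|K4| * (‖p 0‖ + 1)))) + (∑ k, |w k|) * (|K9| * (((∑ k, ∑ j, |ta k j|) * |K1| + (∑ k, ∑ j, |a k j|) * |K2|) * (‖p 0‖ + 1)) + |K4| * ((∑ k, ∑ j, |tβ k j|) * (|K3| * (‖p 0‖ + 1)) + (∑ k, ∑ j, |β k j|) * (|K4| * (‖p 0‖ + 1)))) + ((|K7| * ((|K1| + |K2|) * |Bpt'|) + |K3| * (|K3| * |Bpt'| + |K4| * |Bp'|)) + (|K9| * ((|K1|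 + |K2|) * |Bp'|) + |K4| * (|K3| * |Bpt'| + |K4| * |Bp'|)))) + ((∑ k, |tw k|) * (|K7| * (((∑ k, ∑ j, |ta k j|) * |K1| + (∑ k, ∑ j, |a k j|) * |K2|) * (‖p 0‖ + 1)) + |K3| * ((∑ k, ∑ j, |tα k j|) * (|K3| * (‖p 0‖ + 1)) + (∑ k, ∑ j, |α k j|) * (|K4| * (‖p 0‖ + 1)))) + (∑ k, |w k|) * (|K9| * (((∑ k, ∑ j, |ta k j|) * |K1| + (∑ k, ∑ j, |a k j|) * |K2|) * (‖p 0‖ + 1)) + |K4| * ((∑ k, ∑ j, |tβ k j|) * (|K3| * (‖p 0‖ + 1)) + (∑ k, ∑ j, |β k j|) * (|K4| * (‖p 0‖ + 1)))) + ((|K7| * ((|K1| + |K2|) * |Bpt'|) + |K3| * (|K3| * |Bpt'| + |K4| * |Bp'|)) + (|K9| * ((|K1| + |K2|) * |Bp'|) + |K4| * (|K3| * |Bpt'| + |K4| * |Bp'|)))))) * h ^ 2 :=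
        mul_le_mul_of_nonneg_right (by linarith) (by positivity)
end

section
/- (Theorem 1, second-order part.) Assume the IMEX Runge–Kutta coefficients satisfy the second-order conditions: Σ_{i=1}^{s} ω̃_i = Σ_{i=1}^{s} ω_i = 1 and, with c̃_i := Σ_{j=1}^{s} ã_{ij} and c_i := Σ_{j=1}^{s} a_{ij}, Σ_{i} ω̃_i c̃_i = Σ_{i} ω̃_i c_i = Σ_{i} ω_i c̃_i = Σ_{i} ω_i c_i = 1/2. Then the combined forward–adjoint scheme is of second order: for every exact solution (y, p̃, p) of the coupled system with p̃(0) = p(0) there exist constants C > 0 and h₀ > 0 such that for every 0 < h ≤ h₀, any one step of the combined scheme started at (y(0), p̃(0), p(0)) with p̃_n = p_n, whose stage values Y^(i), P̃^(i), P^(i) satisfy the stage equations and lie within distance 1 of y(0) and p(0) respectively, satisfies ‖y_{n+1} − y(h)‖ + ‖p̃_{n+1} − p̃(h)‖ + ‖p_{n+1} − p(h)‖ ≤ C h³. -/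
open Finset Matrix Metric Set

set_option linter.unusedSectionVars false
set_option linter.unusedVariables false
set_option maxHeartbeats 1600000

section Helpers

variable {E F : Type*} [NormedAddCommGroup E] [NormedSpace ℝ E] [ProperSpace E]
  [NormedAddCommGroup F] [NormedSpace ℝ F]


/-- bound of a continuous map on a closed ball -/
lemma my_bound (Φ : E → F) (hΦ : Continuous Φ) (x0 : E) (R : ℝ) :
    ∃ C ≥ 0, ∀ x ∈ closedBall x0 R, ‖Φ x‖ ≤ C := by
  obtain ⟨C, hC⟩ := (isCompact_closedBall x0 R).exists_bound_of_continuousOn hΦ.continuousOn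
  exact ⟨max C 0, le_max_right _ _, fun x hx => (hC x hx).trans (le_max_left _ _)⟩

/-- Lipschitz bound for a C¹ map on a closed ball -/
lemma my_lip (Φ : E → F) (hΦ : ContDiff ℝ (⊤ : ℕ∞) Φ) (x0 : E) (R : ℝ) :
    ∃ L ≥ 0, ∀ x ∈ closedBall x0 R, ∀ z ∈ closedBall x0 R, ‖Φ x - Φ z‖ ≤ L * ‖x - z‖ := by
  obtain ⟨L, hL0, hL⟩ := my_bound (fderiv ℝ Φ) (hΦ.fderiv_right (m := (⊤ : ℕ∞)) (by simp)).continuous x0 R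
  refine ⟨L, hL0, fun x hx z hz => ?_⟩
  exact (convex_closedBall x0 R).norm_image_sub_le_of_norm_fderiv_le
    (fun v _ => hΦ.differentiable (by simp) v) hL hz hx

/-- first order Taylor bound with quadratic remainder on closed unit ball -/
lemma my_taylor1 (Φ : E → F) (hΦ : ContDiff ℝ (⊤ : ℕ∞) Φ) (x0 : E) :
    ∃ Q ≥ 0, ∀ x ∈ closedBall x0 1,
      ‖Φ x - Φ x0 - fderiv ℝ Φ x0 (x - x0)‖ ≤ Q * ‖x - x0‖ ^ 2 := by
  obtain ⟨L, hL0, hL⟩ := my_lip (fderiv ℝ Φ) (hΦ.fderiv_right (m := (⊤ : ℕ∞)) (by simp)) x0 1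
  refine ⟨L, hL0, fun x hx => ?_⟩
  have hsub : closedBall x0 ‖x - x0‖ ⊆ closedBall x0 1 := by
    apply closedBall_subset_closedBall
    rwa [← dist_eq_norm, ← mem_closedBall]
  have hx' : x ∈ closedBall x0 ‖x - x0‖ := by
    simp [mem_closedBall, dist_eq_norm]
  have h0' : x0 ∈ closedBall x0 ‖x - x0‖ := by
    simp [mem_closedBall, dist_eq_norm]
  have := (convex_closedBall x0 ‖x - x0‖).norm_image_sub_le_of_norm_fderiv_le'
    (f := Φ) (φ := fderiv ℝ Φ x0) (C := L * ‖x - x0‖)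
    (fun v _ => hΦ.differentiable (by simp) v)
    (fun v hv => by
      have := hL v (hsub hv) x0 (hsub h0')
      exact this.trans (by
        have : ‖v - x0‖ ≤ ‖x - x0‖ := by simpa [mem_closedBall, dist_eq_norm] using hv
        nlinarith))
    h0' hx'
  calc ‖Φ x - Φ x0 - (fderiv ℝ Φ x0) (x - x0)‖ ≤ L * ‖x - x0‖ * ‖x - x0‖ := this
    _ = L * ‖x - x0‖ ^ 2 := by ring

/-- second-order Taylor for curves -/
lemma my_taylor2_curve (f f1 f2 : ℝ → F)
    (hf : ∀ t ∈ Icc (0:ℝ) 1, HasDerivAt f (f1 t) t)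
    (hf1 : ∀ t ∈ Icc (0:ℝ) 1, HasDerivAt f1 (f2 t) t)
    (L : ℝ) (hL : 0 ≤ L)
    (hf2 : ∀ t ∈ Icc (0:ℝ) 1, ‖f2 t - f2 0‖ ≤ L * t) :
    ∀ h ∈ Icc (0:ℝ) 1, ‖f h - f 0 - h • f1 0 - (h^2/2) • f2 0‖ ≤ L * h^3 := by
  intro h hh
  obtain ⟨hh0, hh1⟩ := hh
  have hsub : Icc (0:ℝ) h ⊆ Icc (0:ℝ) 1 := Icc_subset_Icc le_rfl hh1
  -- ψ t := f1 t - f1 0 - t • f2 0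
  have hψ : ∀ t ∈ Icc (0:ℝ) h, ‖f1 t - f1 0 - t • f2 0‖ ≤ (L * h) * h := by
    intro t ht
    have key := (convex_Icc (0:ℝ) h).norm_image_sub_le_of_norm_hasDerivWithin_le
      (f := fun t => f1 t - f1 0 - t • f2 0) (f' := fun t => f2 t - f2 0)
      (s := Icc (0:ℝ) h) (C := L * h)
      (fun u hu => by
        have h1 : HasDerivAt (fun t => f1 t - f1 0 - t • f2 0) (f2 u - f2 0) u := by
          exact (((hf1 u (hsub hu)).sub_const (f1 0)).sub
            ((hasDerivAt_id u).smul_const (f2 0))).congr_deriv (by simp)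
        exact h1.hasDerivWithinAt)
      (fun u hu => by
        have := hf2 u (hsub hu)
        have hu2 : u ≤ h := hu.2
        nlinarith [norm_nonneg (f2 u - f2 0), hu.1])
      (left_mem_Icc.mpr hh0) ht
    simp only [zero_smul, sub_zero, sub_self] at key
    calc ‖f1 t - f1 0 - t • f2 0‖ ≤ L * h * ‖t‖ := key
      _ ≤ L * h * h := by
        have h2 : ‖t‖ ≤ h := by
          rw [Real.norm_eq_abs, abs_of_nonneg ht.1]; exact ht.2
        nlinarith [norm_nonneg t, mul_nonneg hL hh0]
  have key := (convex_Icc (0:ℝ) h).norm_image_sub_le_of_norm_hasDerivWithin_le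
    (f := fun t => f t - f 0 - t • f1 0 - (t^2/2) • f2 0)
    (f' := fun t => f1 t - f1 0 - t • f2 0)
    (s := Icc (0:ℝ) h) (C := L * h * h)
    (fun u hu => by
      have h2 : HasDerivAt (fun t : ℝ => (t^2/2) • f2 0) (u • f2 0) u := by
        have : HasDerivAt (fun t : ℝ => t^2/2) u u := by
          simpa using ((hasDerivAt_pow 2 u).div_const 2)
        simpa using this.smul_const (f2 0)
      have h1 : HasDerivAt (fun t => f t - f 0 - t • f1 0 - (t^2/2) • f2 0)
          (f1 u - f1 0 - u • f2 0) u := by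
        exact ((((hf u (hsub hu)).sub_const (f 0)).sub
          ((hasDerivAt_id u).smul_const (f1 0))).sub h2).congr_deriv (by simp)
      exact h1.hasDerivWithinAt)
    (fun u hu => hψ u hu)
    (left_mem_Icc.mpr hh0) (right_mem_Icc.mpr hh0)
  simp only [ne_eq, OfNat.ofNat_ne_zero, not_false_eq_true, zero_pow, zero_div, zero_smul,
    sub_zero, sub_self] at key
  calc ‖f h - f 0 - h • f1 0 - (h^2/2) • f2 0‖ ≤ L * h * h * ‖h‖ := key
    _ ≤ L * h^3 := by
      rw [Real.norm_eq_abs, abs_of_nonneg hh0]; nlinarith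

set_option maxHeartbeats 1000000 in
lemma my_key_sum {s : ℕ} {E F : Type*} [NormedAddCommGroup E] [NormedSpace ℝ E]
    [NormedAddCommGroup F] [NormedSpace ℝ F]
    (ω ct c : Fin s → ℝ) (hω : ∑ i, ω i = 1)
    (h2a : ∑ i, ω i * ct i = 1/2) (h2b : ∑ i, ω i * c i = 1/2)
    (Φ : E → F) (DΦ : E →L[ℝ] F) (y0 u v : E)
    (Q K1 K2 : ℝ) (hQ : 0 ≤ Q)
    (h : ℝ) (Y : Fin s → E)
    (hTay : ∀ i, ‖Φ (Y i) - Φ y0 - DΦ (Y i - y0)‖ ≤ Q * ‖Y i - y0‖ ^ 2)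
    (hS1 : ∀ i, ‖Y i - y0‖ ≤ h * K1)
    (hS2 : ∀ i, ‖Y i - y0 - h • (ct i • u + c i • v)‖ ≤ h ^ 2 * K2) :
    ‖∑ i, ω i • Φ (Y i) - Φ y0 - (h / 2) • DΦ (u + v)‖
      ≤ (∑ i, |ω i|) * (Q * K1 ^ 2 + ‖DΦ‖ * K2) * h ^ 2 := by
  have e1 : ∀ i, ω i • ((Φ (Y i) - Φ y0 - DΦ (Y i - y0))
        + DΦ (Y i - y0 - h • (ct i • u + c i • v)))
      = ω i • Φ (Y i) - ω i • Φ y0 - (h * (ω i * ct i)) • DΦ u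
        - (h * (ω i * c i)) • DΦ v := by
    intro i
    have hD : DΦ (Y i - y0 - h • (ct i • u + c i • v))
        = DΦ (Y i - y0) - h • (ct i • DΦ u + c i • DΦ v) := by
      simp only [map_sub, map_add, _root_.map_smul]
    rw [hD]; module
  have e2 : ∑ i, ω i • Φ y0 = Φ y0 := by rw [← Finset.sum_smul, hω, one_smul]
  have e3 : ∑ i, (h * (ω i * ct i)) • DΦ u = (h / 2) • DΦ u := by
    rw [← Finset.sum_smul, ← Finset.mul_sum, h2a]; module
  have e4 : ∑ i, (h * (ω i * c i)) • DΦ v = (h / 2) • DΦ v := by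
    rw [← Finset.sum_smul, ← Finset.mul_sum, h2b]; module
  have key : ∑ i, ω i • Φ (Y i) - Φ y0 - (h / 2) • DΦ (u + v)
      = ∑ i, ω i • ((Φ (Y i) - Φ y0 - DΦ (Y i - y0))
        + DΦ (Y i - y0 - h • (ct i • u + c i • v))) := by
    rw [Finset.sum_congr rfl (fun i _ => e1 i)]
    rw [Finset.sum_sub_distrib, Finset.sum_sub_distrib, Finset.sum_sub_distrib, e2, e3, e4,
      map_add]
    module
  rw [key]
  have hbound : ∀ i ∈ Finset.univ, ‖ω i • ((Φ (Y i) - Φ y0 - DΦ (Y i - y0))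
        + DΦ (Y i - y0 - h • (ct i • u + c i • v)))‖
      ≤ |ω i| * ((Q * K1 ^ 2 + ‖DΦ‖ * K2) * h ^ 2) := by
    intro i _
    rw [norm_smul, Real.norm_eq_abs]
    have h1 : ‖Φ (Y i) - Φ y0 - DΦ (Y i - y0)‖ ≤ Q * K1 ^ 2 * h ^ 2 := by
      refine (hTay i).trans ?_
      have hs1 := hS1 i
      have h0 : (0:ℝ) ≤ ‖Y i - y0‖ := norm_nonneg _
      have hsq : ‖Y i - y0‖ ^ 2 ≤ (h * K1) ^ 2 := by nlinarith
      nlinarith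
    have h2 : ‖DΦ (Y i - y0 - h • (ct i • u + c i • v))‖ ≤ ‖DΦ‖ * (h ^ 2 * K2) :=
      (DΦ.le_opNorm _).trans (by
        have := hS2 i
        nlinarith [norm_nonneg DΦ])
    have := norm_add_le (Φ (Y i) - Φ y0 - DΦ (Y i - y0))
      (DΦ (Y i - y0 - h • (ct i • u + c i • v)))
    have habs : (0:ℝ) ≤ |ω i| := abs_nonneg _
    nlinarith [norm_nonneg (Φ (Y i) - Φ y0 - DΦ (Y i - y0)),
      norm_nonneg (DΦ (Y i - y0 - h • (ct i • u + c i • v)))]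
  calc ‖∑ i, ω i • ((Φ (Y i) - Φ y0 - DΦ (Y i - y0))
        + DΦ (Y i - y0 - h • (ct i • u + c i • v)))‖
      ≤ ∑ i, |ω i| * ((Q * K1 ^ 2 + ‖DΦ‖ * K2) * h ^ 2) :=
        norm_sum_le_of_le _ hbound
    _ = (∑ i, |ω i|) * (Q * K1 ^ 2 + ‖DΦ‖ * K2) * h ^ 2 := by
        rw [← Finset.sum_mul]; ring

lemma my_coef {s : ℕ} (ω κ cb : Fin s → ℝ) (b A : Fin s → Fin s → ℝ)
    (hω0 : ∀ i, ω i ≠ 0) (hA : ∀ i j, A i j = κ j - (κ j / ω i) * b j i)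
    (hcb : ∀ j, cb j = ∑ i, b j i) :
    ∑ i, ∑ j, ω i * A i j = (∑ i, ω i) * (∑ j, κ j) - ∑ j, κ j * cb j := by
  have e1 : ∀ i j, ω i * A i j = ω i * κ j - κ j * b j i := by
    intro i j; rw [hA]
    have h := hω0 i
    field_simp
  calc ∑ i, ∑ j, ω i * A i j = ∑ i, ∑ j, (ω i * κ j - κ j * b j i) :=
        Finset.sum_congr rfl fun i _ => Finset.sum_congr rfl fun j _ => e1 i j
    _ = (∑ i, ∑ j, ω i * κ j) - ∑ i, ∑ j, κ j * b j i := by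
        rw [← Finset.sum_sub_distrib]
        exact Finset.sum_congr rfl fun i _ => by rw [← Finset.sum_sub_distrib]
    _ = (∑ i, ω i) * (∑ j, κ j) - ∑ j, κ j * cb j := by
        congr 1
        · rw [Finset.sum_mul_sum]
        · rw [Finset.sum_comm]
          exact Finset.sum_congr rfl fun j _ => by rw [hcb, Finset.mul_sum]

noncomputable def matCLM {d : ℕ} (A : Matrix (Fin d) (Fin d) ℝ) :
    (Fin d → ℝ) →L[ℝ] (Fin d → ℝ) :=
  LinearMap.toContinuousLinearMap (Matrix.mulVecLin A)

lemma matCLM_apply {d : ℕ} (A : Matrix (Fin d) (Fin d) ℝ) (x : Fin d → ℝ) :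
    matCLM A x = A *ᵥ x := rfl

noncomputable def matCLMl {d : ℕ} :
    (Fin d → Fin d → ℝ) →ₗ[ℝ] ((Fin d → ℝ) →L[ℝ] (Fin d → ℝ)) where
  toFun A := matCLM (Matrix.of A)
  map_add' A B := by
    ext x i
    simp [matCLM_apply]
    rw [show Matrix.of (A + B) = Matrix.of A + Matrix.of B from rfl, Matrix.add_mulVec]
    simp
  map_smul' c A := by
    ext x i
    simp [matCLM_apply]
    rw [show Matrix.of (c • A) = c • Matrix.of A from rfl, Matrix.smul_mulVec]
    simp

lemma matCLM_contDiff {d : ℕ} {E : Type*} [NormedAddCommGroup E] [NormedSpace ℝ E]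
    (A : E → (Fin d → Fin d → ℝ)) (hA : ContDiff ℝ (⊤ : ℕ∞) A) :
    ContDiff ℝ (⊤ : ℕ∞) (fun x => matCLM (Matrix.of (A x))) := by
  have : (fun x => matCLM (Matrix.of (A x))) = fun x =>
      (LinearMap.toContinuousLinearMap (matCLMl (d := d))) (A x) := rfl
  rw [this]
  exact (LinearMap.toContinuousLinearMap (matCLMl (d := d))).contDiff.comp hA

lemma jac_contDiff {d : ℕ} (g : (Fin d → ℝ) → (Fin d → ℝ)) (hg : ContDiff ℝ (⊤ : ℕ∞) g) :
    ContDiff ℝ (⊤ : ℕ∞) (fun x i j => jacMat g x i j) := by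
  apply contDiff_pi.2
  intro i
  apply contDiff_pi.2
  intro j
  have h1 : ContDiff ℝ (⊤ : ℕ∞) (fun x => fderiv ℝ g x (Pi.single j 1)) :=
    (hg.fderiv_right (m := (⊤ : ℕ∞)) (by simp)).clm_apply contDiff_const
  exact (contDiff_pi.1 h1) i

lemma transmul_contDiff {d : ℕ} (Dbar : Matrix (Fin d) (Fin d) ℝ)
    (A : (Fin d → ℝ) → (Fin d → Fin d → ℝ)) (hA : ContDiff ℝ (⊤ : ℕ∞) A) :
    ContDiff ℝ (⊤ : ℕ∞) (fun x i j => ((Matrix.of (A x))ᵀ * Dbar) i j) := by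
  apply contDiff_pi.2
  intro i
  apply contDiff_pi.2
  intro j
  have : (fun x => ((Matrix.of (A x))ᵀ * Dbar) i j) = fun x => ∑ k, A x k i * Dbar k j := by
    funext x; simp [Matrix.mul_apply, Matrix.transpose_apply]
  exact this ▸ (ContDiff.sum fun k _ =>
    ((contDiff_pi.1 ((contDiff_pi.1 hA) k) i)).mul contDiff_const)

lemma Mmap_contDiff {d : ℕ} (g : (Fin d → ℝ) → (Fin d → ℝ)) (Dbar : Matrix (Fin d) (Fin d) ℝ)
    (hg : ContDiff ℝ (⊤ : ℕ∞) g) :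
    ContDiff ℝ (⊤ : ℕ∞) (fun x => matCLM ((jacMat g x)ᵀ * Dbar)) :=
  matCLM_contDiff _ (transmul_contDiff Dbar _ (jac_contDiff g hg))


/-- bound for weighted sums -/
lemma aux_wsum {s : ℕ} (ω : Fin s → ℝ) (vv : Fin s → E) (B : ℝ) (hB : 0 ≤ B)
    (hv : ∀ i, ‖vv i‖ ≤ B) : ‖∑ i, ω i • vv i‖ ≤ (∑ i, |ω i|) * B := by
  calc ‖∑ i, ω i • vv i‖ ≤ ∑ i, |ω i| * B :=
        norm_sum_le_of_le _ (fun i _ => by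
          rw [norm_smul, Real.norm_eq_abs]
          exact mul_le_mul_of_nonneg_left (hv i) (abs_nonneg _))
    _ = (∑ i, |ω i|) * B := by rw [Finset.sum_mul]

lemma aux_sum_bound {s : ℕ} (b1 b2 : Fin s → Fin s → ℝ) (G H : Fin s → E)
    (BG BH S1 S2 h : ℝ) (hh : 0 ≤ h) (hBG : 0 ≤ BG) (hBH : 0 ≤ BH)
    (hG : ∀ j, ‖G j‖ ≤ BG) (hH : ∀ j, ‖H j‖ ≤ BH)
    (hb1 : ∀ i, ∑ j, |b1 i j| ≤ S1) (hb2 : ∀ i, ∑ j, |b2 i j| ≤ S2) :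
    ∀ i, ‖h • ∑ j, b1 i j • G j + h • ∑ j, b2 i j • H j‖ ≤ h * (S1 * BG + S2 * BH) := by
  intro i
  have h1 : ‖∑ j, b1 i j • G j‖ ≤ S1 * BG := by
    calc ‖∑ j, b1 i j • G j‖ ≤ ∑ j, |b1 i j| * BG :=
          norm_sum_le_of_le _ (fun j _ => by
            rw [norm_smul, Real.norm_eq_abs]
            exact mul_le_mul_of_nonneg_left (hG j) (abs_nonneg _))
      _ = (∑ j, |b1 i j|) * BG := by rw [Finset.sum_mul]
      _ ≤ S1 * BG := mul_le_mul_of_nonneg_right (hb1 i) hBG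
  have h2 : ‖∑ j, b2 i j • H j‖ ≤ S2 * BH := by
    calc ‖∑ j, b2 i j • H j‖ ≤ ∑ j, |b2 i j| * BH :=
          norm_sum_le_of_le _ (fun j _ => by
            rw [norm_smul, Real.norm_eq_abs]
            exact mul_le_mul_of_nonneg_left (hH j) (abs_nonneg _))
      _ = (∑ j, |b2 i j|) * BH := by rw [Finset.sum_mul]
      _ ≤ S2 * BH := mul_le_mul_of_nonneg_right (hb2 i) hBH
  calc ‖h • ∑ j, b1 i j • G j + h • ∑ j, b2 i j • H j‖
      ≤ ‖h • ∑ j, b1 i j • G j‖ + ‖h • ∑ j, b2 i j • H j‖ := norm_add_le _ _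
    _ = h * ‖∑ j, b1 i j • G j‖ + h * ‖∑ j, b2 i j • H j‖ := by
        rw [norm_smul, norm_smul, Real.norm_eq_abs, abs_of_nonneg hh]
    _ ≤ h * (S1 * BG) + h * (S2 * BH) := by
        exact add_le_add (mul_le_mul_of_nonneg_left h1 hh) (mul_le_mul_of_nonneg_left h2 hh)
    _ = h * (S1 * BG + S2 * BH) := by ring

lemma aux_TM {s : ℕ} (ω : Fin s → ℝ) (Mi : Fin s → E →L[ℝ] E) (M0 : E →L[ℝ] E)
    (tP : Fin s → E) (p0 : E) :
    ∑ i, ω i • (Mi i (tP i))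
      = ∑ i, ω i • (Mi i p0) + M0 (∑ i, ω i • (tP i - p0))
        + ∑ i, ω i • ((Mi i - M0) (tP i - p0)) := by
  rw [map_sum]
  rw [← Finset.sum_add_distrib, ← Finset.sum_add_distrib]
  refine Finset.sum_congr rfl fun i _ => ?_
  have e1 : (Mi i - M0) (tP i - p0) = Mi i (tP i) - Mi i p0 - M0 (tP i) + M0 p0 := by
    rw [ContinuousLinearMap.sub_apply, map_sub, map_sub]; abel
  have e2 : M0 (ω i • (tP i - p0)) = ω i • M0 (tP i) - ω i • M0 p0 := by
    rw [_root_.map_smul, map_sub, smul_sub]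
  rw [e1, e2]
  module

lemma aux_W {s : ℕ} (ω : Fin s → ℝ) (b1 b2 : Fin s → Fin s → ℝ) (G H : Fin s → E)
    (Gc Hc : E) (h δG δH : ℝ) (hh : 0 ≤ h) (hδG0 : 0 ≤ δG) (hδH0 : 0 ≤ δH)
    (hδG : ∀ j, ‖G j - Gc‖ ≤ δG) (hδH : ∀ j, ‖H j - Hc‖ ≤ δH)
    (tPd : Fin s → E)
    (htPd : ∀ i, tPd i = -(h • ∑ j, b1 i j • G j) - h • ∑ j, b2 i j • H j) :
    ‖∑ i, ω i • tPd i + h • ((∑ i, ∑ j, ω i * b1 i j) • Gc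
        + (∑ i, ∑ j, ω i * b2 i j) • Hc)‖
      ≤ h * ((∑ i, ∑ j, |ω i * b1 i j|) * δG + (∑ i, ∑ j, |ω i * b2 i j|) * δH) := by
  have key : ∑ i, ω i • tPd i + h • ((∑ i, ∑ j, ω i * b1 i j) • Gc
        + (∑ i, ∑ j, ω i * b2 i j) • Hc)
      = -(h • (∑ i, ∑ j, (ω i * b1 i j) • (G j - Gc)))
        - h • (∑ i, ∑ j, (ω i * b2 i j) • (H j - Hc)) := by
    have e1 : ∀ i, ω i • tPd i
        = -(h • ∑ j, (ω i * b1 i j) • G j) - h • ∑ j, (ω i * b2 i j) • H j := by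
      intro i
      rw [htPd i]
      have f1 : ∑ j, (ω i * b1 i j) • G j = ω i • ∑ j, b1 i j • G j := by
        rw [Finset.smul_sum]
        exact Finset.sum_congr rfl fun j _ => (smul_smul _ _ _).symm
      have f2 : ∑ j, (ω i * b2 i j) • H j = ω i • ∑ j, b2 i j • H j := by
        rw [Finset.smul_sum]
        exact Finset.sum_congr rfl fun j _ => (smul_smul _ _ _).symm
      rw [f1, f2]
      module
    rw [Finset.sum_congr rfl fun i _ => e1 i]
    have e2 : ∀ i, ∀ j : Fin s, (ω i * b1 i j) • (G j - Gc)
        = (ω i * b1 i j) • G j - (ω i * b1 i j) • Gc := fun i j => smul_sub _ _ _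
    have e3 : ∀ i, ∀ j : Fin s, (ω i * b2 i j) • (H j - Hc)
        = (ω i * b2 i j) • H j - (ω i * b2 i j) • Hc := fun i j => smul_sub _ _ _
    simp only [e2, e3, Finset.sum_sub_distrib, ← Finset.sum_smul, smul_sub,
      ← Finset.smul_sum, Finset.sum_neg_distrib, smul_add]
    abel
  rw [key]
  have hb1 : ‖∑ i, ∑ j, (ω i * b1 i j) • (G j - Gc)‖
      ≤ (∑ i, ∑ j, |ω i * b1 i j|) * δG := by
    calc ‖∑ i, ∑ j, (ω i * b1 i j) • (G j - Gc)‖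
        ≤ ∑ i, ∑ j, |ω i * b1 i j| * δG := by
          refine norm_sum_le_of_le _ fun i _ => ?_
          refine norm_sum_le_of_le _ fun j _ => ?_
          rw [norm_smul, Real.norm_eq_abs]
          exact mul_le_mul_of_nonneg_left (hδG j) (abs_nonneg _)
      _ = (∑ i, ∑ j, |ω i * b1 i j|) * δG := by
          rw [Finset.sum_mul]
          exact Finset.sum_congr rfl fun i _ => by rw [Finset.sum_mul]
  have hb2 : ‖∑ i, ∑ j, (ω i * b2 i j) • (H j - Hc)‖
      ≤ (∑ i, ∑ j, |ω i * b2 i j|) * δH := by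
    calc ‖∑ i, ∑ j, (ω i * b2 i j) • (H j - Hc)‖
        ≤ ∑ i, ∑ j, |ω i * b2 i j| * δH := by
          refine norm_sum_le_of_le _ fun i _ => ?_
          refine norm_sum_le_of_le _ fun j _ => ?_
          rw [norm_smul, Real.norm_eq_abs]
          exact mul_le_mul_of_nonneg_left (hδH j) (abs_nonneg _)
      _ = (∑ i, ∑ j, |ω i * b2 i j|) * δH := by
          rw [Finset.sum_mul]
          exact Finset.sum_congr rfl fun i _ => by rw [Finset.sum_mul]
  calc ‖-(h • (∑ i, ∑ j, (ω i * b1 i j) • (G j - Gc)))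
        - h • (∑ i, ∑ j, (ω i * b2 i j) • (H j - Hc))‖
      ≤ ‖h • (∑ i, ∑ j, (ω i * b1 i j) • (G j - Gc))‖
        + ‖h • (∑ i, ∑ j, (ω i * b2 i j) • (H j - Hc))‖ := by
        refine (norm_sub_le _ _).trans ?_
        rw [norm_neg]
    _ ≤ h * ((∑ i, ∑ j, |ω i * b1 i j|) * δG) + h * ((∑ i, ∑ j, |ω i * b2 i j|) * δH) := by
        rw [norm_smul, norm_smul, Real.norm_eq_abs, abs_of_nonneg hh]
        exact add_le_add (mul_le_mul_of_nonneg_left hb1 hh) (mul_le_mul_of_nonneg_left hb2 hh)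
    _ = h * ((∑ i, ∑ j, |ω i * b1 i j|) * δG + (∑ i, ∑ j, |ω i * b2 i j|) * δH) := by ring

lemma Mmap_contDiff2 {d : ℕ} (r : (Fin d → ℝ) → (Fin d → ℝ)) (hr : ContDiff ℝ (⊤ : ℕ∞) r) :
    ContDiff ℝ (⊤ : ℕ∞) (fun x => matCLM ((jacMat r x)ᵀ)) := by
  have h := jac_contDiff r hr
  have h2 : ContDiff ℝ (⊤ : ℕ∞) (fun x => (fun i j : Fin d => jacMat r x j i)) :=
    contDiff_pi.2 fun i => contDiff_pi.2 fun j => (contDiff_pi.1 (contDiff_pi.1 h j) i)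
  exact matCLM_contDiff _ h2

lemma row_le_total {s : ℕ} (b : Fin s → Fin s → ℝ) (i : Fin s) :
    ∑ j, |b i j| ≤ ∑ i', ∑ j, |b i' j| :=
  Finset.single_le_sum (f := fun i' => ∑ j, |b i' j|)
    (fun i' _ => Finset.sum_nonneg fun j _ => abs_nonneg _) (Finset.mem_univ i)

lemma total_nonneg {s : ℕ} (b : Fin s → Fin s → ℝ) :
    0 ≤ ∑ i, ∑ j, |b i j| :=
  Finset.sum_nonneg fun i _ => Finset.sum_nonneg fun j _ => abs_nonneg _

lemma abs_total_nonneg {s : ℕ} (ω : Fin s → ℝ) : 0 ≤ ∑ i, |ω i| :=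
  Finset.sum_nonneg fun i _ => abs_nonneg _

end Helpers

/-- Theorem 1, second-order part: if the IMEX Runge–Kutta method satisfies the
second-order conditions, then one step of the combined forward–adjoint scheme
has a local error of order `h³`. -/
theorem imex_adjoint_second_order (s d : ℕ) (hs : 1 ≤ s) (hd : 1 ≤ d)
    (ta a : Fin s → Fin s → ℝ) (tw w : Fin s → ℝ)
    (hta : ∀ i j : Fin s, i ≤ j → ta i j = 0)
    (ha : ∀ i j : Fin s, i < j → a i j = 0)
    (htw0 : ∀ i, tw i ≠ 0) (hw0 : ∀ i, w i ≠ 0)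
    (tα α tβ β : Fin s → Fin s → ℝ)
    (htα : ∀ i j, tα i j = tw j - (tw j / tw i) * ta j i)
    (hα : ∀ i j, α i j = w j - (w j / tw i) * ta j i)
    (htβ : ∀ i j, tβ i j = tw j - (tw j / w i) * a j i)
    (hβ : ∀ i j, β i j = w j - (w j / w i) * a j i)
    (ε : ℝ) (hε : 0 < ε)
    (D Dbar : Matrix (Fin d) (Fin d) ℝ)
    (g r : (Fin d → ℝ) → (Fin d → ℝ))
    (hg : ContDiff ℝ (⊤ : ℕ∞) g) (hr : ContDiff ℝ (⊤ : ℕ∞) r)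
    (hgb : ∀ n : ℕ, ∃ C, ∀ x, ‖iteratedFDeriv ℝ n g x‖ ≤ C)
    (hrb : ∀ n : ℕ, ∃ C, ∀ x, ‖iteratedFDeriv ℝ n r x‖ ≤ C)
    -- second-order conditions
    (hord1 : ∑ i, tw i = 1) (hord1' : ∑ i, w i = 1)
    (ct c : Fin s → ℝ)
    (hct : ∀ i, ct i = ∑ j, ta i j) (hc : ∀ i, c i = ∑ j, a i j)
    (hord2a : ∑ i, tw i * ct i = 1 / 2) (hord2b : ∑ i, tw i * c i = 1 / 2)
    (hord2c : ∑ i, w i * ct i = 1 / 2) (hord2d : ∑ i, w i * c i = 1 / 2)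
    -- exact solution of the coupled forward–adjoint system
    (y pt p : ℝ → Fin d → ℝ)
    (hy : ∀ t, HasDerivAt y (D *ᵥ g (y t) + ε⁻¹ • r (y t)) t)
    (hpt : ∀ t, HasDerivAt pt
      (-(((jacMat g (y t))ᵀ * Dbar) *ᵥ pt t)
        - ε⁻¹ • ((jacMat r (y t))ᵀ *ᵥ p t)) t)
    (hp : ∀ t, HasDerivAt p
      (-(((jacMat g (y t))ᵀ * Dbar) *ᵥ pt t)
        - ε⁻¹ • ((jacMat r (y t))ᵀ *ᵥ p t)) t)
    (h0eq : pt 0 = p 0) :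
    ∃ C > (0:ℝ), ∃ h₀ > (0:ℝ), ∀ h : ℝ, 0 < h → h ≤ h₀ →
      ∀ Y tP P : Fin s → Fin d → ℝ,
      (∀ i, Y i = y 0
          + h • ∑ j ∈ univ.filter (fun j => j < i), ta i j • (D *ᵥ g (Y j))
          + h • ∑ j ∈ univ.filter (fun j => j ≤ i), a i j • (ε⁻¹ • r (Y j))) →
      (∀ i, tP i = p 0
          - h • ∑ j, tα i j • (((jacMat g (Y j))ᵀ * Dbar) *ᵥ tP j)
          - h • ∑ j, α i j • (ε⁻¹ • ((jacMat r (Y j))ᵀ *ᵥ P j))) →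
      (∀ i, P i = p 0
          - h • ∑ j, tβ i j • (((jacMat g (Y j))ᵀ * Dbar) *ᵥ tP j)
          - h • ∑ j, β i j • (ε⁻¹ • ((jacMat r (Y j))ᵀ *ᵥ P j))) →
      (∀ i, ‖Y i - y 0‖ ≤ 1 ∧ ‖tP i - p 0‖ ≤ 1 ∧ ‖P i - p 0‖ ≤ 1) →
      ‖(y 0 + h • ∑ i, tw i • (D *ᵥ g (Y i))
            + h • ∑ i, w i • (ε⁻¹ • r (Y i))) - y h‖
      + ‖(pt 0 - h • ∑ i, tw i • (((jacMat g (Y i))ᵀ * Dbar) *ᵥ tP i)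
               - h • ∑ i, w i • (ε⁻¹ • ((jacMat r (Y i))ᵀ *ᵥ P i))) - pt h‖
      + ‖(p 0 - h • ∑ i, tw i • (((jacMat g (Y i))ᵀ * Dbar) *ᵥ tP i)
              - h • ∑ i, w i • (ε⁻¹ • ((jacMat r (Y i))ᵀ *ᵥ P i))) - p h‖
      ≤ C * h ^ 3 := by

  classical
  -- Step 0: pt = p
  have hptp : pt = p := by
    have hd0 : ∀ t : ℝ, HasDerivAt (fun u => pt u - p u) 0 t := by
      intro t
      exact ((hpt t).sub (hp t)).congr_deriv (sub_self _)
    funext t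
    have hconst : pt t - p t = pt 0 - p 0 :=
      is_const_of_deriv_eq_zero (fun u => (hd0 u).differentiableAt)
        (fun u => (hd0 u).deriv) t 0
    have h2 : pt t - p t = 0 := by rw [hconst, h0eq, sub_self]
    exact sub_eq_zero.mp h2
  rw [hptp]
  -- basic smooth vector fields
  set Fv : (Fin d → ℝ) → (Fin d → ℝ) := fun x => D *ᵥ g x + ε⁻¹ • r x with hFvdef
  have hFv : ContDiff ℝ (⊤ : ℕ∞) Fv := ((matCLM D).contDiff.comp hg).add (hr.const_smul ε⁻¹)
  set Mv : (Fin d → ℝ) → (Fin d → ℝ) →L[ℝ] (Fin d → ℝ) :=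
    fun x => matCLM ((jacMat g x)ᵀ * Dbar) with hMvdef
  set Nv : (Fin d → ℝ) → (Fin d → ℝ) →L[ℝ] (Fin d → ℝ) :=
    fun x => ε⁻¹ • matCLM ((jacMat r x)ᵀ) with hNvdef
  set Sv : (Fin d → ℝ) → (Fin d → ℝ) →L[ℝ] (Fin d → ℝ) := fun x => Mv x + Nv x with hSvdef
  have hMv : ContDiff ℝ (⊤ : ℕ∞) Mv := Mmap_contDiff g Dbar hg
  have hNv : ContDiff ℝ (⊤ : ℕ∞) Nv := (Mmap_contDiff2 r hr).const_smul ε⁻¹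
  have hSv : ContDiff ℝ (⊤ : ℕ∞) Sv := hMv.add hNv
  have hyF : ∀ t, HasDerivAt y (Fv (y t)) t := hy
  have hpF : ∀ t, HasDerivAt p (-(Sv (y t) (p t))) t := by
    intro t
    have h1 := hp t
    rw [hptp] at h1
    have e : (-(((jacMat g (y t))ᵀ * Dbar) *ᵥ p t) - ε⁻¹ • ((jacMat r (y t))ᵀ *ᵥ p t))
        = -(Sv (y t) (p t)) := by
      have e1 : Sv (y t) (p t) = ((jacMat g (y t))ᵀ * Dbar) *ᵥ p t
          + ε⁻¹ • ((jacMat r (y t))ᵀ *ᵥ p t) := rfl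
      rw [e1]; abel
    rw [e] at h1; exact h1
  -- continuity and compact bounds for the exact solutions
  have hydiff : Differentiable ℝ y := fun t => (hyF t).differentiableAt
  have hpdiff : Differentiable ℝ p := fun t => (hpF t).differentiableAt
  have hycont : Continuous y := hydiff.continuous
  have hpcont : Continuous p := hpdiff.continuous
  obtain ⟨RY, hRY⟩ := (isCompact_Icc (a := (0:ℝ)) (b := 1)).exists_bound_of_continuousOn
    (f := fun t => y t - y 0) ((hycont.sub continuous_const).continuousOn)
  obtain ⟨RP, hRP⟩ := (isCompact_Icc (a := (0:ℝ)) (b := 1)).exists_bound_of_continuousOn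
    (f := fun t => p t - p 0) ((hpcont.sub continuous_const).continuousOn)
  obtain ⟨CY, hCY⟩ := (isCompact_Icc (a := (0:ℝ)) (b := 1)).exists_bound_of_continuousOn
    (f := fun t => Fv (y t)) ((hFv.continuous.comp hycont).continuousOn)
  have hSpcont : Continuous (fun t => -(Sv (y t) (p t))) :=
    ((hSv.continuous.comp hycont).clm_apply hpcont).neg
  obtain ⟨CP, hCP⟩ := (isCompact_Icc (a := (0:ℝ)) (b := 1)).exists_bound_of_continuousOn
    (f := fun t => -(Sv (y t) (p t))) hSpcont.continuousOn
  have h01 : (0:ℝ) ∈ Icc (0:ℝ) 1 := ⟨le_rfl, zero_le_one⟩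
  have hCY0 : 0 ≤ CY := (norm_nonneg _).trans (hCY 0 h01)
  have hCP0 : 0 ≤ CP := (norm_nonneg _).trans (hCP 0 h01)
  -- Lipschitz in t
  have hyLip : ∀ t ∈ Icc (0:ℝ) 1, ‖y t - y 0‖ ≤ CY * t := by
    intro t ht
    have key := (convex_Icc (0:ℝ) 1).norm_image_sub_le_of_norm_hasDerivWithin_le
      (f := y) (f' := fun t => Fv (y t)) (C := CY)
      (fun u hu => (hyF u).hasDerivWithinAt) (fun u hu => hCY u hu) h01 ht
    calc ‖y t - y 0‖ ≤ CY * ‖t - 0‖ := key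
      _ = CY * t := by rw [sub_zero, Real.norm_eq_abs, abs_of_nonneg ht.1]
  have hpLip : ∀ t ∈ Icc (0:ℝ) 1, ‖p t - p 0‖ ≤ CP * t := by
    intro t ht
    have key := (convex_Icc (0:ℝ) 1).norm_image_sub_le_of_norm_hasDerivWithin_le
      (f := p) (f' := fun t => -(Sv (y t) (p t))) (C := CP)
      (fun u hu => (hpF u).hasDerivWithinAt) (fun u hu => hCP u hu) h01 ht
    calc ‖p t - p 0‖ ≤ CP * ‖t - 0‖ := key
      _ = CP * t := by rw [sub_zero, Real.norm_eq_abs, abs_of_nonneg ht.1]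
  -- Taylor expansion of y
  set Gy : (Fin d → ℝ) → (Fin d → ℝ) := fun x => fderiv ℝ Fv x (Fv x) with hGydef
  have hGy : ContDiff ℝ (⊤ : ℕ∞) Gy := (hFv.fderiv_right (m := (⊤ : ℕ∞)) (by simp)).clm_apply hFv
  obtain ⟨LGy, hLGy0, hLGy⟩ := my_lip Gy hGy (y 0) (max RY 0)
  have hymem : ∀ t ∈ Icc (0:ℝ) 1, y t ∈ closedBall (y 0) (max RY 0) := by
    intro t ht; rw [mem_closedBall, dist_eq_norm]
    exact (hRY t ht).trans (le_max_left _ _)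
  have hy0mem : y 0 ∈ closedBall (y 0) (max RY 0) := mem_closedBall_self (le_max_right _ _)
  have hf2yLip : ∀ t ∈ Icc (0:ℝ) 1, ‖Gy (y t) - Gy (y 0)‖ ≤ (LGy * CY) * t := by
    intro t ht
    calc ‖Gy (y t) - Gy (y 0)‖ ≤ LGy * ‖y t - y 0‖ := hLGy _ (hymem t ht) _ hy0mem
      _ ≤ LGy * (CY * t) := mul_le_mul_of_nonneg_left (hyLip t ht) hLGy0
      _ = (LGy * CY) * t := by ring
  have hTY := my_taylor2_curve y (fun t => Fv (y t)) (fun t => Gy (y t))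
    (fun t _ => hyF t)
    (fun t _ => ((hFv.differentiable (by simp) (y t)).hasFDerivAt.comp_hasDerivAt t (hyF t)))
    (LGy * CY) (mul_nonneg hLGy0 hCY0) hf2yLip
  -- Taylor expansion of p
  set f1p : ℝ → (Fin d → ℝ) := fun t => -(Sv (y t) (p t)) with hf1pdef
  set f2p : ℝ → (Fin d → ℝ) := fun t =>
    -((fderiv ℝ Sv (y t)) (Fv (y t)) (p t) + Sv (y t) (-(Sv (y t) (p t)))) with hf2pdef
  have hf1p : ∀ t ∈ Icc (0:ℝ) 1, HasDerivAt f1p (f2p t) t := by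
    intro t _
    have hc : HasDerivAt (fun u => Sv (y u)) ((fderiv ℝ Sv (y t)) (Fv (y t))) t :=
      (hSv.differentiable (by simp) (y t)).hasFDerivAt.comp_hasDerivAt t (hyF t)
    exact (hc.clm_apply (hpF t)).neg
  set ΘS : (Fin d → ℝ) × (Fin d → ℝ) → (Fin d → ℝ) := fun q =>
    -((fderiv ℝ Sv q.1) (Fv q.1) q.2 + Sv q.1 (-(Sv q.1 q.2))) with hThSdef
  have hThS : ContDiff ℝ (⊤ : ℕ∞) ΘS := by
    have h1 : ContDiff ℝ (⊤ : ℕ∞) (fun q : (Fin d → ℝ) × (Fin d → ℝ) => (fderiv ℝ Sv q.1) (Fv q.1)) :=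
      ((hSv.fderiv_right (m := (⊤ : ℕ∞)) (by simp)).comp contDiff_fst).clm_apply (hFv.comp contDiff_fst)
    have h2 : ContDiff ℝ (⊤ : ℕ∞) (fun q : (Fin d → ℝ) × (Fin d → ℝ) => Sv q.1 (-(Sv q.1 q.2))) :=
      (hSv.comp contDiff_fst).clm_apply (((hSv.comp contDiff_fst).clm_apply contDiff_snd).neg)
    exact ((h1.clm_apply contDiff_snd).add h2).neg
  obtain ⟨LTh, hLTh0, hLTh⟩ := my_lip ΘS hThS (y 0, p 0) (max (max RY 0) (max RP 0))
  have hqmem : ∀ t ∈ Icc (0:ℝ) 1,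
      (y t, p t) ∈ closedBall (y 0, p 0) (max (max RY 0) (max RP 0)) := by
    intro t ht
    rw [mem_closedBall, Prod.dist_eq]
    apply max_le
    · rw [dist_eq_norm]
      exact ((hRY t ht).trans (le_max_left _ _)).trans (le_max_left _ _)
    · rw [dist_eq_norm]
      exact ((hRP t ht).trans (le_max_left _ _)).trans (le_max_right _ _)
  have hq0mem : (y 0, p 0) ∈ closedBall (y 0, p 0) (max (max RY 0) (max RP 0)) :=
    mem_closedBall_self ((le_max_right RY 0).trans (le_max_left _ _))
  have hf2pLip : ∀ t ∈ Icc (0:ℝ) 1, ‖f2p t - f2p 0‖ ≤ (LTh * (CY + CP)) * t := by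
    intro t ht
    have e1 : f2p t = ΘS (y t, p t) := rfl
    have e2 : f2p 0 = ΘS (y 0, p 0) := rfl
    rw [e1, e2]
    calc ‖ΘS (y t, p t) - ΘS (y 0, p 0)‖ ≤ LTh * ‖(y t, p t) - (y 0, p 0)‖ :=
          hLTh _ (hqmem t ht) _ hq0mem
      _ ≤ LTh * (CY * t + CP * t) := by
          apply mul_le_mul_of_nonneg_left _ hLTh0
          have e3 : (y t, p t) - (y 0, p 0) = (y t - y 0, p t - p 0) := rfl
          rw [e3, Prod.norm_def]
          apply max_le
          · linarith [hyLip t ht, mul_nonneg hCP0 ht.1]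
          · linarith [hpLip t ht, mul_nonneg hCY0 ht.1]
      _ = (LTh * (CY + CP)) * t := by ring
  have hTP := my_taylor2_curve p f1p f2p (fun t _ => hpF t) hf1p (LTh * (CY + CP))
    (mul_nonneg hLTh0 (by linarith)) hf2pLip

  -- numerical-side constants
  set uu : Fin d → ℝ := D *ᵥ g (y 0) with huudef
  set vvv : Fin d → ℝ := ε⁻¹ • r (y 0) with hvvdef
  have hPhig : ContDiff ℝ (⊤ : ℕ∞) (fun x => D *ᵥ g x) := (matCLM D).contDiff.comp hg
  have hPhir : ContDiff ℝ (⊤ : ℕ∞) (fun x => ε⁻¹ • r x) := hr.const_smul ε⁻¹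
  obtain ⟨Cg, hCg0, hCg⟩ := my_bound (fun x => D *ᵥ g x) hPhig.continuous (y 0) 1
  obtain ⟨Cr, hCr0, hCr⟩ := my_bound (fun x => ε⁻¹ • r x) hPhir.continuous (y 0) 1
  obtain ⟨CMb, hCMb0, hCMb⟩ := my_bound Mv hMv.continuous (y 0) 1
  obtain ⟨CNb, hCNb0, hCNb⟩ := my_bound Nv hNv.continuous (y 0) 1
  obtain ⟨Lg, hLg0, hLg⟩ := my_lip (fun x => D *ᵥ g x) hPhig (y 0) 1
  obtain ⟨Lr, hLr0, hLr⟩ := my_lip (fun x => ε⁻¹ • r x) hPhir (y 0) 1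
  obtain ⟨LM, hLM0, hLM⟩ := my_lip Mv hMv (y 0) 1
  obtain ⟨LN, hLN0, hLN⟩ := my_lip Nv hNv (y 0) 1
  obtain ⟨Qg, hQg0, hQg⟩ := my_taylor1 (fun x => D *ᵥ g x) hPhig (y 0)
  obtain ⟨Qr, hQr0, hQr⟩ := my_taylor1 (fun x => ε⁻¹ • r x) hPhir (y 0)
  obtain ⟨QM, hQM0, hQM⟩ := my_taylor1 (fun x => Mv x (p 0)) (hMv.clm_apply contDiff_const) (y 0)
  obtain ⟨QN, hQN0, hQN⟩ := my_taylor1 (fun x => Nv x (p 0)) (hNv.clm_apply contDiff_const) (y 0)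
  -- fixed continuous linear maps
  set Dg0 : (Fin d → ℝ) →L[ℝ] (Fin d → ℝ) := fderiv ℝ (fun x => D *ᵥ g x) (y 0) with hDg0def
  set Dr0 : (Fin d → ℝ) →L[ℝ] (Fin d → ℝ) := fderiv ℝ (fun x => ε⁻¹ • r x) (y 0) with hDr0def
  set DM0 : (Fin d → ℝ) →L[ℝ] (Fin d → ℝ) := fderiv ℝ (fun x => Mv x (p 0)) (y 0) with hDM0def
  set DN0 : (Fin d → ℝ) →L[ℝ] (Fin d → ℝ) := fderiv ℝ (fun x => Nv x (p 0)) (y 0) with hDN0def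
  -- coefficient magnitude constants
  set Sta : ℝ := ∑ i, ∑ j, |ta i j| with hStadef
  set Sa : ℝ := ∑ i, ∑ j, |a i j| with hSadef
  set Stal : ℝ := ∑ i, ∑ j, |tα i j| with hStaldef
  set Sal : ℝ := ∑ i, ∑ j, |α i j| with hSaldef
  set Stbe : ℝ := ∑ i, ∑ j, |tβ i j| with hStbedef
  set Sbe : ℝ := ∑ i, ∑ j, |β i j| with hSbedef
  set Stw : ℝ := ∑ i, |tw i| with hStwdef
  set Sw : ℝ := ∑ i, |w i| with hSwdef
  have hSta0 : 0 ≤ Sta := total_nonneg ta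
  have hSa0 : 0 ≤ Sa := total_nonneg a
  have hStal0 : 0 ≤ Stal := total_nonneg tα
  have hSal0 : 0 ≤ Sal := total_nonneg α
  have hStbe0 : 0 ≤ Stbe := total_nonneg tβ
  have hSbe0 : 0 ≤ Sbe := total_nonneg β
  have hStw0 : 0 ≤ Stw := abs_total_nonneg tw
  have hSw0 : 0 ≤ Sw := abs_total_nonneg w
  -- stage constants
  set Pb : ℝ := ‖p 0‖ + 1 with hPbdef
  have hPb0 : 0 ≤ Pb := by positivity
  set K1 : ℝ := Sta * Cg + Sa * Cr with hK1def
  have hK10 : 0 ≤ K1 := add_nonneg (mul_nonneg hSta0 hCg0) (mul_nonneg hSa0 hCr0)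
  set K2 : ℝ := Sta * (Lg * K1) + Sa * (Lr * K1) with hK2def
  have hK20 : 0 ≤ K2 := add_nonneg (mul_nonneg hSta0 (mul_nonneg hLg0 hK10))
    (mul_nonneg hSa0 (mul_nonneg hLr0 hK10))
  set K3 : ℝ := Stal * (CMb * Pb) + Sal * (CNb * Pb) with hK3def
  have hK30 : 0 ≤ K3 := add_nonneg (mul_nonneg hStal0 (mul_nonneg hCMb0 hPb0))
    (mul_nonneg hSal0 (mul_nonneg hCNb0 hPb0))
  set K4 : ℝ := Stbe * (CMb * Pb) + Sbe * (CNb * Pb) with hK4def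
  have hK40 : 0 ≤ K4 := add_nonneg (mul_nonneg hStbe0 (mul_nonneg hCMb0 hPb0))
    (mul_nonneg hSbe0 (mul_nonneg hCNb0 hPb0))
  set K5 : ℝ := LM * K1 * Pb + CMb * K3 with hK5def
  have hK50 : 0 ≤ K5 := add_nonneg (mul_nonneg (mul_nonneg hLM0 hK10) hPb0)
    (mul_nonneg hCMb0 hK30)
  set K6 : ℝ := LN * K1 * Pb + CNb * K4 with hK6def
  have hK60 : 0 ≤ K6 := add_nonneg (mul_nonneg (mul_nonneg hLN0 hK10) hPb0)
    (mul_nonneg hCNb0 hK40)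
  -- coefficient identities
  have hcoef1 : ∑ i, ∑ j, tw i * tα i j = 1 / 2 := by
    rw [my_coef tw tw ct ta tα htw0 htα hct, hord1, hord2a]
    norm_num
  have hcoef2 : ∑ i, ∑ j, tw i * α i j = 1 / 2 := by
    rw [my_coef tw w ct ta α htw0 hα hct, hord1, hord1', hord2c]
    norm_num
  have hcoef3 : ∑ i, ∑ j, w i * tβ i j = 1 / 2 := by
    rw [my_coef w tw c a tβ hw0 htβ hc, hord1, hord1', hord2b]
    norm_num
  have hcoef4 : ∑ i, ∑ j, w i * β i j = 1 / 2 := by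
    rw [my_coef w w c a β hw0 hβ hc, hord1', hord2d]
    norm_num
  -- error constants
  set BA : ℝ := Stw * (Qg * K1 ^ 2 + ‖Dg0‖ * K2) with hBAdef
  set BB : ℝ := Sw * (Qr * K1 ^ 2 + ‖Dr0‖ * K2) with hBBdef
  set BM : ℝ := Stw * (QM * K1 ^ 2 + ‖DM0‖ * K2) with hBMdef
  set BN : ℝ := Sw * (QN * K1 ^ 2 + ‖DN0‖ * K2) with hBNdef
  have hBA0 : 0 ≤ BA := mul_nonneg hStw0 (add_nonneg (mul_nonneg hQg0 (sq_nonneg _))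
    (mul_nonneg (norm_nonneg _) hK20))
  have hBB0 : 0 ≤ BB := mul_nonneg hSw0 (add_nonneg (mul_nonneg hQr0 (sq_nonneg _))
    (mul_nonneg (norm_nonneg _) hK20))
  have hBM0 : 0 ≤ BM := mul_nonneg hStw0 (add_nonneg (mul_nonneg hQM0 (sq_nonneg _))
    (mul_nonneg (norm_nonneg _) hK20))
  have hBN0 : 0 ≤ BN := mul_nonneg hSw0 (add_nonneg (mul_nonneg hQN0 (sq_nonneg _))
    (mul_nonneg (norm_nonneg _) hK20))
  set KBM : ℝ := (∑ i, ∑ j, |tw i * tα i j|) * K5 + (∑ i, ∑ j, |tw i * α i j|) * K6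
    with hKBMdef
  set KBP : ℝ := (∑ i, ∑ j, |w i * tβ i j|) * K5 + (∑ i, ∑ j, |w i * β i j|) * K6
    with hKBPdef
  have hKBM0 : 0 ≤ KBM := add_nonneg (mul_nonneg (total_nonneg _) hK50)
    (mul_nonneg (total_nonneg _) hK60)
  have hKBP0 : 0 ≤ KBP := add_nonneg (mul_nonneg (total_nonneg _) hK50)
    (mul_nonneg (total_nonneg _) hK60)
  set CYF : ℝ := BA + BB + LGy * CY with hCYFdef
  set CPF : ℝ := BM + BN + CMb * KBM + CNb * KBP + Stw * (LM * K1 * K3)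
    + Sw * (LN * K1 * K4) + LTh * (CY + CP) with hCPFdef
  have hCYF0 : 0 ≤ CYF := by
    have := mul_nonneg hLGy0 hCY0
    linarith
  have hCPF0 : 0 ≤ CPF := by
    have h1 := mul_nonneg hCMb0 hKBM0
    have h2 := mul_nonneg hCNb0 hKBP0
    have h3 := mul_nonneg hStw0 (mul_nonneg (mul_nonneg hLM0 hK10) hK30)
    have h4 := mul_nonneg hSw0 (mul_nonneg (mul_nonneg hLN0 hK10) hK40)
    have h5 := mul_nonneg hLTh0 (by linarith : (0:ℝ) ≤ CY + CP)
    linarith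
  refine ⟨CYF + 2 * CPF + 1, by linarith, 1, one_pos, ?_⟩
  intro h hh0 hh1 Y tP P hYeq htPeq hPeq hclose

  have hh0' : (0:ℝ) ≤ h := le_of_lt hh0
  have hhIcc : h ∈ Icc (0:ℝ) 1 := ⟨hh0', hh1⟩
  have hYmem : ∀ i, Y i ∈ closedBall (y 0) 1 := fun i => by
    rw [mem_closedBall, dist_eq_norm]; exact (hclose i).1
  have hy0mem1 : y 0 ∈ closedBall (y 0) 1 := mem_closedBall_self zero_le_one
  have htPn : ∀ i, ‖tP i‖ ≤ Pb := by
    intro i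
    calc ‖tP i‖ = ‖p 0 + (tP i - p 0)‖ := by congr 1; abel
      _ ≤ ‖p 0‖ + ‖tP i - p 0‖ := norm_add_le _ _
      _ ≤ ‖p 0‖ + 1 := by linarith [(hclose i).2.1]
  have hPn : ∀ i, ‖P i‖ ≤ Pb := by
    intro i
    calc ‖P i‖ = ‖p 0 + (P i - p 0)‖ := by congr 1; abel
      _ ≤ ‖p 0‖ + ‖P i - p 0‖ := norm_add_le _ _
      _ ≤ ‖p 0‖ + 1 := by linarith [(hclose i).2.2]
  -- stage equations in full-sum form
  have hYd : ∀ i, Y i - y 0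
      = h • ∑ j, ta i j • (D *ᵥ g (Y j)) + h • ∑ j, a i j • (ε⁻¹ • r (Y j)) := by
    intro i
    have h1 : ∑ j ∈ univ.filter (fun j => j < i), ta i j • (D *ᵥ g (Y j))
        = ∑ j, ta i j • (D *ᵥ g (Y j)) := by
      apply Finset.sum_subset (Finset.filter_subset _ _)
      intro j _ hj
      have hij : ta i j = 0 := hta i j (not_lt.1 (by simpa using hj))
      simp [hij]
    have h2 : ∑ j ∈ univ.filter (fun j => j ≤ i), a i j • (ε⁻¹ • r (Y j))
        = ∑ j, a i j • (ε⁻¹ • r (Y j)) := by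
      apply Finset.sum_subset (Finset.filter_subset _ _)
      intro j _ hj
      have hij : a i j = 0 := ha i j (not_le.1 (by simpa using hj))
      simp [hij]
    rw [hYeq i, h1, h2]; abel
  have htPd : ∀ i, tP i - p 0
      = -(h • ∑ j, tα i j • (Mv (Y j) (tP j))) - h • ∑ j, α i j • (Nv (Y j) (P j)) := by
    intro i
    have e1 : ∀ j : Fin s, Mv (Y j) (tP j) = ((jacMat g (Y j))ᵀ * Dbar) *ᵥ tP j :=
      fun j => rfl
    have e2 : ∀ j : Fin s, Nv (Y j) (P j) = ε⁻¹ • ((jacMat r (Y j))ᵀ *ᵥ P j) :=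
      fun j => rfl
    simp only [e1, e2]
    rw [htPeq i]; abel
  have hPd : ∀ i, P i - p 0
      = -(h • ∑ j, tβ i j • (Mv (Y j) (tP j))) - h • ∑ j, β i j • (Nv (Y j) (P j)) := by
    intro i
    have e1 : ∀ j : Fin s, Mv (Y j) (tP j) = ((jacMat g (Y j))ᵀ * Dbar) *ᵥ tP j :=
      fun j => rfl
    have e2 : ∀ j : Fin s, Nv (Y j) (P j) = ε⁻¹ • ((jacMat r (Y j))ᵀ *ᵥ P j) :=
      fun j => rfl
    simp only [e1, e2]
    rw [hPeq i]; abel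
  -- stage estimates
  have hS1 : ∀ i, ‖Y i - y 0‖ ≤ h * K1 := by
    intro i
    rw [hYd i]
    exact aux_sum_bound ta a (fun j => D *ᵥ g (Y j)) (fun j => ε⁻¹ • r (Y j)) Cg Cr Sta Sa
      h hh0' hCg0 hCr0 (fun j => hCg _ (hYmem j)) (fun j => hCr _ (hYmem j))
      (row_le_total ta) (row_le_total a) i
  have hgLipY : ∀ j : Fin s, ‖D *ᵥ g (Y j) - uu‖ ≤ Lg * (h * K1) := by
    intro j
    exact (hLg (Y j) (hYmem j) (y 0) hy0mem1).trans
      (mul_le_mul_of_nonneg_left (hS1 j) hLg0)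
  have hrLipY : ∀ j : Fin s, ‖ε⁻¹ • r (Y j) - vvv‖ ≤ Lr * (h * K1) := by
    intro j
    exact (hLr (Y j) (hYmem j) (y 0) hy0mem1).trans
      (mul_le_mul_of_nonneg_left (hS1 j) hLr0)
  have hS2 : ∀ i, ‖Y i - y 0 - h • (ct i • uu + c i • vvv)‖ ≤ h ^ 2 * K2 := by
    intro i
    have e : Y i - y 0 - h • (ct i • uu + c i • vvv)
        = h • ∑ j, ta i j • (D *ᵥ g (Y j) - uu) + h • ∑ j, a i j • (ε⁻¹ • r (Y j) - vvv) := by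
      have f1 : ∑ j, ta i j • (D *ᵥ g (Y j) - uu)
          = (∑ j, ta i j • (D *ᵥ g (Y j))) - ct i • uu := by
        rw [hct i, Finset.sum_smul]
        simp only [smul_sub, Finset.sum_sub_distrib]
      have f2 : ∑ j, a i j • (ε⁻¹ • r (Y j) - vvv)
          = (∑ j, a i j • (ε⁻¹ • r (Y j))) - c i • vvv := by
        rw [hc i, Finset.sum_smul]
        simp only [smul_sub, Finset.sum_sub_distrib]
      rw [f1, f2, hYd i]
      module
    rw [e]
    refine (aux_sum_bound ta a _ _ (Lg * (h * K1)) (Lr * (h * K1)) Sta Sa h hh0'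
      (mul_nonneg hLg0 (mul_nonneg hh0' hK10)) (mul_nonneg hLr0 (mul_nonneg hh0' hK10))
      hgLipY hrLipY (row_le_total ta) (row_le_total a) i).trans (le_of_eq ?_)
    rw [hK2def]; ring
  have hMbY : ∀ j : Fin s, ‖Mv (Y j) (tP j)‖ ≤ CMb * Pb := by
    intro j
    calc ‖Mv (Y j) (tP j)‖ ≤ ‖Mv (Y j)‖ * ‖tP j‖ := (Mv (Y j)).le_opNorm _
      _ ≤ CMb * Pb := mul_le_mul (hCMb _ (hYmem j)) (htPn j) (norm_nonneg _) hCMb0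
  have hNbY : ∀ j : Fin s, ‖Nv (Y j) (P j)‖ ≤ CNb * Pb := by
    intro j
    calc ‖Nv (Y j) (P j)‖ ≤ ‖Nv (Y j)‖ * ‖P j‖ := (Nv (Y j)).le_opNorm _
      _ ≤ CNb * Pb := mul_le_mul (hCNb _ (hYmem j)) (hPn j) (norm_nonneg _) hCNb0
  have hS3 : ∀ i, ‖tP i - p 0‖ ≤ h * K3 := by
    intro i
    rw [htPd i]
    have e : -(h • ∑ j, tα i j • (Mv (Y j) (tP j))) - h • ∑ j, α i j • (Nv (Y j) (P j))
        = -((h • ∑ j, tα i j • (Mv (Y j) (tP j))) + h • ∑ j, α i j • (Nv (Y j) (P j))) := by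
      abel
    rw [e, norm_neg]
    exact aux_sum_bound tα α (fun j => Mv (Y j) (tP j)) (fun j => Nv (Y j) (P j))
      (CMb * Pb) (CNb * Pb) Stal Sal h hh0' (mul_nonneg hCMb0 hPb0) (mul_nonneg hCNb0 hPb0)
      hMbY hNbY (row_le_total tα) (row_le_total α) i
  have hS4 : ∀ i, ‖P i - p 0‖ ≤ h * K4 := by
    intro i
    rw [hPd i]
    have e : -(h • ∑ j, tβ i j • (Mv (Y j) (tP j))) - h • ∑ j, β i j • (Nv (Y j) (P j))
        = -((h • ∑ j, tβ i j • (Mv (Y j) (tP j))) + h • ∑ j, β i j • (Nv (Y j) (P j))) := by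
      abel
    rw [e, norm_neg]
    exact aux_sum_bound tβ β (fun j => Mv (Y j) (tP j)) (fun j => Nv (Y j) (P j))
      (CMb * Pb) (CNb * Pb) Stbe Sbe h hh0' (mul_nonneg hCMb0 hPb0) (mul_nonneg hCNb0 hPb0)
      hMbY hNbY (row_le_total tβ) (row_le_total β) i
  have hS5 : ∀ j : Fin s, ‖Mv (Y j) (tP j) - Mv (y 0) (p 0)‖ ≤ h * K5 := by
    intro j
    have e : Mv (Y j) (tP j) - Mv (y 0) (p 0)
        = (Mv (Y j) - Mv (y 0)) (tP j) + Mv (y 0) (tP j - p 0) := by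
      rw [ContinuousLinearMap.sub_apply, map_sub]; abel
    rw [e]
    calc ‖(Mv (Y j) - Mv (y 0)) (tP j) + Mv (y 0) (tP j - p 0)‖
        ≤ ‖(Mv (Y j) - Mv (y 0)) (tP j)‖ + ‖Mv (y 0) (tP j - p 0)‖ := norm_add_le _ _
      _ ≤ ‖Mv (Y j) - Mv (y 0)‖ * ‖tP j‖ + ‖Mv (y 0)‖ * ‖tP j - p 0‖ :=
          add_le_add ((Mv (Y j) - Mv (y 0)).le_opNorm _) ((Mv (y 0)).le_opNorm _)
      _ ≤ (LM * (h * K1)) * Pb + CMb * (h * K3) := by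
          apply add_le_add
          · exact mul_le_mul ((hLM (Y j) (hYmem j) (y 0) hy0mem1).trans
              (mul_le_mul_of_nonneg_left (hS1 j) hLM0)) (htPn j) (norm_nonneg _)
              (mul_nonneg hLM0 (mul_nonneg hh0' hK10))
          · exact mul_le_mul (hCMb _ hy0mem1) (hS3 j) (norm_nonneg _) hCMb0
      _ = h * K5 := by rw [hK5def]; ring
  have hS6 : ∀ j : Fin s, ‖Nv (Y j) (P j) - Nv (y 0) (p 0)‖ ≤ h * K6 := by
    intro j
    have e : Nv (Y j) (P j) - Nv (y 0) (p 0)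
        = (Nv (Y j) - Nv (y 0)) (P j) + Nv (y 0) (P j - p 0) := by
      rw [ContinuousLinearMap.sub_apply, map_sub]; abel
    rw [e]
    calc ‖(Nv (Y j) - Nv (y 0)) (P j) + Nv (y 0) (P j - p 0)‖
        ≤ ‖(Nv (Y j) - Nv (y 0)) (P j)‖ + ‖Nv (y 0) (P j - p 0)‖ := norm_add_le _ _
      _ ≤ ‖Nv (Y j) - Nv (y 0)‖ * ‖P j‖ + ‖Nv (y 0)‖ * ‖P j - p 0‖ :=
          add_le_add ((Nv (Y j) - Nv (y 0)).le_opNorm _) ((Nv (y 0)).le_opNorm _)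
      _ ≤ (LN * (h * K1)) * Pb + CNb * (h * K4) := by
          apply add_le_add
          · exact mul_le_mul ((hLN (Y j) (hYmem j) (y 0) hy0mem1).trans
              (mul_le_mul_of_nonneg_left (hS1 j) hLN0)) (hPn j) (norm_nonneg _)
              (mul_nonneg hLN0 (mul_nonneg hh0' hK10))
          · exact mul_le_mul (hCNb _ hy0mem1) (hS4 j) (norm_nonneg _) hCNb0
      _ = h * K6 := by rw [hK6def]; ring

  -- weighted-sum expansions
  have hA1g : ‖(∑ i, tw i • (D *ᵥ g (Y i))) - uu - (h / 2) • Dg0 (uu + vvv)‖ ≤ BA * h ^ 2 :=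
    my_key_sum tw ct c hord1 hord2a hord2b (fun x => D *ᵥ g x) Dg0 (y 0) uu vvv
      Qg K1 K2 hQg0 h Y (fun i => hQg (Y i) (hYmem i)) hS1 hS2
  have hA1r : ‖(∑ i, w i • (ε⁻¹ • r (Y i))) - vvv - (h / 2) • Dr0 (uu + vvv)‖ ≤ BB * h ^ 2 :=
    my_key_sum w ct c hord1' hord2c hord2d (fun x => ε⁻¹ • r x) Dr0 (y 0) uu vvv
      Qr K1 K2 hQr0 h Y (fun i => hQr (Y i) (hYmem i)) hS1 hS2
  have hA1M : ‖(∑ i, tw i • (Mv (Y i) (p 0))) - Mv (y 0) (p 0) - (h / 2) • DM0 (uu + vvv)‖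
      ≤ BM * h ^ 2 :=
    my_key_sum tw ct c hord1 hord2a hord2b (fun x => Mv x (p 0)) DM0 (y 0) uu vvv
      QM K1 K2 hQM0 h Y (fun i => hQM (Y i) (hYmem i)) hS1 hS2
  have hA1N : ‖(∑ i, w i • (Nv (Y i) (p 0))) - Nv (y 0) (p 0) - (h / 2) • DN0 (uu + vvv)‖
      ≤ BN * h ^ 2 :=
    my_key_sum w ct c hord1' hord2c hord2d (fun x => Nv x (p 0)) DN0 (y 0) uu vvv
      QN K1 K2 hQN0 h Y (fun i => hQN (Y i) (hYmem i)) hS1 hS2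
  -- forward error
  have hTaylorY : ‖y h - y 0 - h • Fv (y 0) - (h ^ 2 / 2) • Gy (y 0)‖ ≤ (LGy * CY) * h ^ 3 :=
    hTY h hhIcc
  have hFv0 : Fv (y 0) = uu + vvv := rfl
  have hGy0 : Gy (y 0) = Dg0 (uu + vvv) + Dr0 (uu + vvv) := by
    have hdg : DifferentiableAt ℝ (fun x => D *ᵥ g x) (y 0) :=
      (hPhig.differentiable (by simp)) (y 0)
    have hdr : DifferentiableAt ℝ (fun x => ε⁻¹ • r x) (y 0) :=
      (hPhir.differentiable (by simp)) (y 0)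
    have e1 : fderiv ℝ Fv (y 0) = Dg0 + Dr0 := fderiv_add hdg hdr
    have e2 : Gy (y 0) = fderiv ℝ Fv (y 0) (Fv (y 0)) := rfl
    rw [e2, e1, hFv0]; rfl
  have hT1 : ‖(y 0 + h • ∑ i, tw i • (D *ᵥ g (Y i)) + h • ∑ i, w i • (ε⁻¹ • r (Y i))) - y h‖
      ≤ CYF * h ^ 3 := by
    have hX1 : (y 0 + h • ∑ i, tw i • (D *ᵥ g (Y i)) + h • ∑ i, w i • (ε⁻¹ • r (Y i))) - y h
        = (h • ((∑ i, tw i • (D *ᵥ g (Y i))) - uu - (h / 2) • Dg0 (uu + vvv))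
           + h • ((∑ i, w i • (ε⁻¹ • r (Y i))) - vvv - (h / 2) • Dr0 (uu + vvv)))
          - (y h - y 0 - h • Fv (y 0) - (h ^ 2 / 2) • Gy (y 0)) := by
      rw [hFv0, hGy0]
      module
    rw [hX1]
    calc ‖(h • ((∑ i, tw i • (D *ᵥ g (Y i))) - uu - (h / 2) • Dg0 (uu + vvv))
           + h • ((∑ i, w i • (ε⁻¹ • r (Y i))) - vvv - (h / 2) • Dr0 (uu + vvv)))
          - (y h - y 0 - h • Fv (y 0) - (h ^ 2 / 2) • Gy (y 0))‖
        ≤ ‖h • ((∑ i, tw i • (D *ᵥ g (Y i))) - uu - (h / 2) • Dg0 (uu + vvv))‖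
          + ‖h • ((∑ i, w i • (ε⁻¹ • r (Y i))) - vvv - (h / 2) • Dr0 (uu + vvv))‖
          + ‖y h - y 0 - h • Fv (y 0) - (h ^ 2 / 2) • Gy (y 0)‖ :=
          (norm_sub_le _ _).trans (by gcongr; exact norm_add_le _ _)
      _ ≤ h * (BA * h ^ 2) + h * (BB * h ^ 2) + (LGy * CY) * h ^ 3 := by
          rw [norm_smul, norm_smul, Real.norm_eq_abs, abs_of_nonneg hh0']
          exact add_le_add (add_le_add (mul_le_mul_of_nonneg_left hA1g hh0')
            (mul_le_mul_of_nonneg_left hA1r hh0')) hTaylorY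
      _ = CYF * h ^ 3 := by rw [hCYFdef]; ring

  -- adjoint decompositions
  have hTMdec : ∑ i, tw i • (Mv (Y i) (tP i))
      = ∑ i, tw i • (Mv (Y i) (p 0)) + Mv (y 0) (∑ i, tw i • (tP i - p 0))
        + ∑ i, tw i • ((Mv (Y i) - Mv (y 0)) (tP i - p 0)) :=
    aux_TM tw (fun i => Mv (Y i)) (Mv (y 0)) tP (p 0)
  have hTNdec : ∑ i, w i • (Nv (Y i) (P i))
      = ∑ i, w i • (Nv (Y i) (p 0)) + Nv (y 0) (∑ i, w i • (P i - p 0))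
        + ∑ i, w i • ((Nv (Y i) - Nv (y 0)) (P i - p 0)) :=
    aux_TM w (fun i => Nv (Y i)) (Nv (y 0)) P (p 0)
  have hSv00 : Sv (y 0) (p 0) = Mv (y 0) (p 0) + Nv (y 0) (p 0) := rfl
  have hc12 : h • ((∑ i, ∑ j, tw i * tα i j) • (Mv (y 0) (p 0))
        + (∑ i, ∑ j, tw i * α i j) • (Nv (y 0) (p 0))) = (h / 2) • (Sv (y 0) (p 0)) := by
    rw [hcoef1, hcoef2, hSv00]
    module
  have hc34 : h • ((∑ i, ∑ j, w i * tβ i j) • (Mv (y 0) (p 0))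
        + (∑ i, ∑ j, w i * β i j) • (Nv (y 0) (p 0))) = (h / 2) • (Sv (y 0) (p 0)) := by
    rw [hcoef3, hcoef4, hSv00]
    module
  have hWM : ‖(∑ i, tw i • (tP i - p 0)) + (h / 2) • (Sv (y 0) (p 0))‖ ≤ KBM * h ^ 2 := by
    rw [← hc12]
    refine (aux_W tw tα α (fun j => Mv (Y j) (tP j)) (fun j => Nv (Y j) (P j))
      (Mv (y 0) (p 0)) (Nv (y 0) (p 0)) h (h * K5) (h * K6) hh0'
      (mul_nonneg hh0' hK50) (mul_nonneg hh0' hK60) hS5 hS6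
      (fun i => tP i - p 0) htPd).trans (le_of_eq ?_)
    rw [hKBMdef]; ring
  have hWP : ‖(∑ i, w i • (P i - p 0)) + (h / 2) • (Sv (y 0) (p 0))‖ ≤ KBP * h ^ 2 := by
    rw [← hc34]
    refine (aux_W w tβ β (fun j => Mv (Y j) (tP j)) (fun j => Nv (Y j) (P j))
      (Mv (y 0) (p 0)) (Nv (y 0) (p 0)) h (h * K5) (h * K6) hh0'
      (mul_nonneg hh0' hK50) (mul_nonneg hh0' hK60) hS5 hS6
      (fun i => P i - p 0) hPd).trans (le_of_eq ?_)
    rw [hKBPdef]; ring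
  have hEC1 : ‖∑ i, tw i • ((Mv (Y i) - Mv (y 0)) (tP i - p 0))‖
      ≤ Stw * (LM * K1 * K3) * h ^ 2 := by
    refine (aux_wsum tw _ ((LM * (h * K1)) * (h * K3))
      (mul_nonneg (mul_nonneg hLM0 (mul_nonneg hh0' hK10)) (mul_nonneg hh0' hK30))
      (fun i => ?_)).trans (le_of_eq ?_)
    · calc ‖(Mv (Y i) - Mv (y 0)) (tP i - p 0)‖
          ≤ ‖Mv (Y i) - Mv (y 0)‖ * ‖tP i - p 0‖ := (Mv (Y i) - Mv (y 0)).le_opNorm _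
        _ ≤ (LM * (h * K1)) * (h * K3) :=
            mul_le_mul ((hLM (Y i) (hYmem i) (y 0) hy0mem1).trans
              (mul_le_mul_of_nonneg_left (hS1 i) hLM0)) (hS3 i) (norm_nonneg _)
              (mul_nonneg hLM0 (mul_nonneg hh0' hK10))
    · rw [hStwdef]; ring
  have hEC2 : ‖∑ i, w i • ((Nv (Y i) - Nv (y 0)) (P i - p 0))‖
      ≤ Sw * (LN * K1 * K4) * h ^ 2 := by
    refine (aux_wsum w _ ((LN * (h * K1)) * (h * K4))
      (mul_nonneg (mul_nonneg hLN0 (mul_nonneg hh0' hK10)) (mul_nonneg hh0' hK40))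
      (fun i => ?_)).trans (le_of_eq ?_)
    · calc ‖(Nv (Y i) - Nv (y 0)) (P i - p 0)‖
          ≤ ‖Nv (Y i) - Nv (y 0)‖ * ‖P i - p 0‖ := (Nv (Y i) - Nv (y 0)).le_opNorm _
        _ ≤ (LN * (h * K1)) * (h * K4) :=
            mul_le_mul ((hLN (Y i) (hYmem i) (y 0) hy0mem1).trans
              (mul_le_mul_of_nonneg_left (hS1 i) hLN0)) (hS4 i) (norm_nonneg _)
              (mul_nonneg hLN0 (mul_nonneg hh0' hK10))
    · rw [hSwdef]; ring
  -- identities for the Taylor coefficients of p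
  have hf1p0e : f1p 0 = -(Sv (y 0) (p 0)) := rfl
  have hf2p0e : f2p 0 = -((fderiv ℝ Sv (y 0)) (Fv (y 0)) (p 0))
      + Sv (y 0) (Sv (y 0) (p 0)) := by
    have e0 : f2p 0 = -((fderiv ℝ Sv (y 0)) (Fv (y 0)) (p 0)
        + Sv (y 0) (-(Sv (y 0) (p 0)))) := rfl
    rw [e0, map_neg]; abel
  have hDsum : (fderiv ℝ Sv (y 0)) (Fv (y 0)) (p 0) = DM0 (uu + vvv) + DN0 (uu + vvv) := by
    have hdM : DifferentiableAt ℝ (fun x => Mv x (p 0)) (y 0) :=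
      ((hMv.clm_apply contDiff_const).differentiable (by simp)) (y 0)
    have hdN : DifferentiableAt ℝ (fun x => Nv x (p 0)) (y 0) :=
      ((hNv.clm_apply contDiff_const).differentiable (by simp)) (y 0)
    have e1 : fderiv ℝ (fun x => Sv x (p 0)) (y 0) = DM0 + DN0 := fderiv_add hdM hdN
    have e2 : fderiv ℝ (fun x => Sv x (p 0)) (y 0) = (fderiv ℝ Sv (y 0)).flip (p 0) := by
      rw [fderiv_clm_apply ((hSv.differentiable (by simp)) (y 0)) (differentiableAt_const (p 0))]
      simp
    calc (fderiv ℝ Sv (y 0)) (Fv (y 0)) (p 0)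
        = ((fderiv ℝ Sv (y 0)).flip (p 0)) (Fv (y 0)) := rfl
      _ = (DM0 + DN0) (Fv (y 0)) := by rw [← e2, e1]
      _ = DM0 (uu + vvv) + DN0 (uu + vvv) := by rw [hFv0]; rfl
  have hInner : (∑ i, tw i • (Mv (Y i) (tP i))) + (∑ i, w i • (Nv (Y i) (P i)))
        + f1p 0 + (h / 2) • f2p 0
      = ((∑ i, tw i • (Mv (Y i) (p 0))) - Mv (y 0) (p 0) - (h / 2) • DM0 (uu + vvv))
        + ((∑ i, w i • (Nv (Y i) (p 0))) - Nv (y 0) (p 0) - (h / 2) • DN0 (uu + vvv))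
        + Mv (y 0) ((∑ i, tw i • (tP i - p 0)) + (h / 2) • (Sv (y 0) (p 0)))
        + Nv (y 0) ((∑ i, w i • (P i - p 0)) + (h / 2) • (Sv (y 0) (p 0)))
        + (∑ i, tw i • ((Mv (Y i) - Mv (y 0)) (tP i - p 0)))
        + (∑ i, w i • ((Nv (Y i) - Nv (y 0)) (P i - p 0))) := by
    have hSS : Sv (y 0) (Sv (y 0) (p 0))
        = Mv (y 0) (Sv (y 0) (p 0)) + Nv (y 0) (Sv (y 0) (p 0)) := rfl
    rw [hTMdec, hTNdec, hf1p0e, hf2p0e, hDsum, hSS,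
      map_add (Mv (y 0)) (∑ i, tw i • (tP i - p 0)) ((h / 2) • (Sv (y 0) (p 0))),
      map_add (Nv (y 0)) (∑ i, w i • (P i - p 0)) ((h / 2) • (Sv (y 0) (p 0))),
      _root_.map_smul (Mv (y 0)) (h / 2) (Sv (y 0) (p 0)),
      _root_.map_smul (Nv (y 0)) (h / 2) (Sv (y 0) (p 0)), hSv00]
    module
  have hIb : ‖(∑ i, tw i • (Mv (Y i) (tP i))) + (∑ i, w i • (Nv (Y i) (P i)))
        + f1p 0 + (h / 2) • f2p 0‖
      ≤ (BM + BN + CMb * KBM + CNb * KBP + Stw * (LM * K1 * K3)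
          + Sw * (LN * K1 * K4)) * h ^ 2 := by
    rw [hInner]
    have n1 : ‖Mv (y 0) ((∑ i, tw i • (tP i - p 0)) + (h / 2) • (Sv (y 0) (p 0)))‖
        ≤ CMb * (KBM * h ^ 2) := by
      calc ‖Mv (y 0) ((∑ i, tw i • (tP i - p 0)) + (h / 2) • (Sv (y 0) (p 0)))‖
          ≤ ‖Mv (y 0)‖ * ‖(∑ i, tw i • (tP i - p 0)) + (h / 2) • (Sv (y 0) (p 0))‖ :=
            (Mv (y 0)).le_opNorm _
        _ ≤ CMb * (KBM * h ^ 2) :=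
            mul_le_mul (hCMb _ hy0mem1) hWM (norm_nonneg _) hCMb0
    have n2 : ‖Nv (y 0) ((∑ i, w i • (P i - p 0)) + (h / 2) • (Sv (y 0) (p 0)))‖
        ≤ CNb * (KBP * h ^ 2) := by
      calc ‖Nv (y 0) ((∑ i, w i • (P i - p 0)) + (h / 2) • (Sv (y 0) (p 0)))‖
          ≤ ‖Nv (y 0)‖ * ‖(∑ i, w i • (P i - p 0)) + (h / 2) • (Sv (y 0) (p 0))‖ :=
            (Nv (y 0)).le_opNorm _
        _ ≤ CNb * (KBP * h ^ 2) :=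
            mul_le_mul (hCNb _ hy0mem1) hWP (norm_nonneg _) hCNb0
    have tri : ∀ A B C2 D2 E2 F2 : Fin d → ℝ,
        ‖A + B + C2 + D2 + E2 + F2‖ ≤ ‖A‖ + ‖B‖ + ‖C2‖ + ‖D2‖ + ‖E2‖ + ‖F2‖ := by
      intro A B C2 D2 E2 F2
      calc ‖A + B + C2 + D2 + E2 + F2‖ ≤ ‖A + B + C2 + D2 + E2‖ + ‖F2‖ := norm_add_le _ _
        _ ≤ (‖A + B + C2 + D2‖ + ‖E2‖) + ‖F2‖ :=
            by have := norm_add_le (A + B + C2 + D2) E2; linarith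
        _ ≤ ((‖A + B + C2‖ + ‖D2‖) + ‖E2‖) + ‖F2‖ :=
            by have := norm_add_le (A + B + C2) D2; linarith
        _ ≤ (((‖A + B‖ + ‖C2‖) + ‖D2‖) + ‖E2‖) + ‖F2‖ :=
            by have := norm_add_le (A + B) C2; linarith
        _ ≤ ‖A‖ + ‖B‖ + ‖C2‖ + ‖D2‖ + ‖E2‖ + ‖F2‖ := by
            have := norm_add_le A B
            linarith
    refine (tri _ _ _ _ _ _).trans ?_
    have total := add_le_add (add_le_add (add_le_add (add_le_add (add_le_add hA1M hA1N) n1) n2)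
      hEC1) hEC2
    calc _ ≤ BM * h ^ 2 + BN * h ^ 2 + CMb * (KBM * h ^ 2) + CNb * (KBP * h ^ 2)
          + Stw * (LM * K1 * K3) * h ^ 2 + Sw * (LN * K1 * K4) * h ^ 2 := total
      _ = (BM + BN + CMb * KBM + CNb * KBP + Stw * (LM * K1 * K3)
          + Sw * (LN * K1 * K4)) * h ^ 2 := by ring
  -- adjoint error bound
  have hTaylorP : ‖p h - p 0 - h • f1p 0 - (h ^ 2 / 2) • f2p 0‖
      ≤ (LTh * (CY + CP)) * h ^ 3 := hTP h hhIcc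
  have hT3 : ‖(p 0 - h • ∑ i, tw i • (((jacMat g (Y i))ᵀ * Dbar) *ᵥ tP i)
        - h • ∑ i, w i • (ε⁻¹ • ((jacMat r (Y i))ᵀ *ᵥ P i))) - p h‖ ≤ CPF * h ^ 3 := by
    have eM : ∀ i : Fin s, tw i • (((jacMat g (Y i))ᵀ * Dbar) *ᵥ tP i)
        = tw i • (Mv (Y i) (tP i)) := fun i => rfl
    have eN : ∀ i : Fin s, w i • (ε⁻¹ • ((jacMat r (Y i))ᵀ *ᵥ P i))
        = w i • (Nv (Y i) (P i)) := fun i => rfl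
    simp only [eM, eN]
    have hX1p : (p 0 - h • ∑ i, tw i • (Mv (Y i) (tP i))
          - h • ∑ i, w i • (Nv (Y i) (P i))) - p h
        = -(h • ((∑ i, tw i • (Mv (Y i) (tP i))) + (∑ i, w i • (Nv (Y i) (P i)))
              + f1p 0 + (h / 2) • f2p 0))
          - (p h - p 0 - h • f1p 0 - (h ^ 2 / 2) • f2p 0) := by
      module
    rw [hX1p]
    calc ‖-(h • ((∑ i, tw i • (Mv (Y i) (tP i))) + (∑ i, w i • (Nv (Y i) (P i)))
              + f1p 0 + (h / 2) • f2p 0))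
          - (p h - p 0 - h • f1p 0 - (h ^ 2 / 2) • f2p 0)‖
        ≤ ‖h • ((∑ i, tw i • (Mv (Y i) (tP i))) + (∑ i, w i • (Nv (Y i) (P i)))
              + f1p 0 + (h / 2) • f2p 0)‖
          + ‖p h - p 0 - h • f1p 0 - (h ^ 2 / 2) • f2p 0‖ := by
          refine (norm_sub_le _ _).trans ?_
          rw [norm_neg]
      _ ≤ h * ((BM + BN + CMb * KBM + CNb * KBP + Stw * (LM * K1 * K3)
            + Sw * (LN * K1 * K4)) * h ^ 2) + (LTh * (CY + CP)) * h ^ 3 := by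
          rw [norm_smul, Real.norm_eq_abs, abs_of_nonneg hh0']
          exact add_le_add (mul_le_mul_of_nonneg_left hIb hh0') hTaylorP
      _ = CPF * h ^ 3 := by rw [hCPFdef]; ring
  calc ‖(y 0 + h • ∑ i, tw i • (D *ᵥ g (Y i)) + h • ∑ i, w i • (ε⁻¹ • r (Y i))) - y h‖
        + ‖(p 0 - h • ∑ i, tw i • (((jacMat g (Y i))ᵀ * Dbar) *ᵥ tP i)
            - h • ∑ i, w i • (ε⁻¹ • ((jacMat r (Y i))ᵀ *ᵥ P i))) - p h‖
        + ‖(p 0 - h • ∑ i, tw i • (((jacMat g (Y i))ᵀ * Dbar) *ᵥ tP i)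
            - h • ∑ i, w i • (ε⁻¹ • ((jacMat r (Y i))ᵀ *ᵥ P i))) - p h‖
      ≤ CYF * h ^ 3 + CPF * h ^ 3 + CPF * h ^ 3 := by
        exact add_le_add (add_le_add hT1 hT3) hT3
    _ ≤ (CYF + 2 * CPF + 1) * h ^ 3 := by
        have h3 : (0:ℝ) ≤ h ^ 3 := pow_nonneg hh0' 3
        have e : (CYF + 2 * CPF + 1) * h ^ 3
            = CYF * h ^ 3 + CPF * h ^ 3 + CPF * h ^ 3 + h ^ 3 := by ring
        linarith
end
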